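/- arXiv:2302.13723 — 5 statements merged into one kernel-verified Lean document; each statement's English description precedes it below -/
import Mathlib

section
/- Let T > 0 and let h ∈ L¹([0, T/2]) have bounded mean oscillation on [0, T/2], i.e. ‖h‖_{BMO[0,T/2]} := sup{O(h,I) : I ⊆ [0,T/2] a closed interval of positive length} < ∞. Define H : ℝ → ℝ as the even T-periodic extension of h, i.e. H(x) = h(x) for x ∈ [0, T/2], H(−x) = H(x) and H(x + T) = H(x) for all x ∈ ℝ. Then H ∈ BMO(ℝ) and ‖H‖_{BMO(ℝ)} ≤ 10 ‖h‖_{BMO[0,T/2]}. -/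
open MeasureTheory Set Filter
open scoped ENNReal Topology

/-- Mean oscillation of `f` over `A`. -/
noncomputable def osc1 (f : ℝ → ℝ) (A : Set ℝ) : ℝ :=
  ⨍ x in A, |f x - ⨍ y in A, f y|

/-- BMO(ℝ) seminorm: supremum of mean oscillations over closed intervals of positive length. -/
noncomputable def bmo1 (f : ℝ → ℝ) : ℝ≥0∞ :=
  ⨆ (a : ℝ) (b : ℝ) (_ : a < b), ENNReal.ofReal (osc1 f (Icc a b))

/-- BMO seminorm restricted to a set `s`: supremum over closed intervals of positive
length contained in `s`. -/
noncomputable def bmoOn (f : ℝ → ℝ) (s : Set ℝ) : ℝ≥0∞ :=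
  ⨆ (a : ℝ) (b : ℝ) (_ : a < b) (_ : Icc a b ⊆ s), ENNReal.ofReal (osc1 f (Icc a b))

/-!
On each half period `[kT/2, (k+1)T/2]` the extension `H` is a translate or a reflection of `h`,
and `H` is symmetric about every point of `(T/2)ℤ`. The basic estimate is
`O(f, I) ≤ (2/|I|) ∫_J |f - c|` for any interval `J ⊇ I` and any constant `c`.
An interval `I` of length at least `T/2` is covered by `n` periods starting at its left end, with
`nT ≤ 3|I|`; taking `c` the average of `h` gives `O(H, I) ≤ 6 O(h, [0, T/2])`.
A shorter interval, translated by a period so that it starts in `[-T/2, T/2)`, either lies in a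
half period, or contains a symmetry point `p ∈ {0, T/2}` and then lies in `[p - |I|, p + |I|]`;
there symmetry doubles the deviation from the average over `[p - |I|, p]`, so
`O(H, I) ≤ 4 O(H, [p - |I|, p])`.
-/

section MeanOscillation

variable {f : ℝ → ℝ} {a b : ℝ}

lemma osc1_nonneg (f : ℝ → ℝ) (A : Set ℝ) : 0 ≤ osc1 f A := by
  rw [osc1, setAverage_eq]
  exact smul_nonneg (by positivity) (integral_nonneg fun x => abs_nonneg _)

lemma osc1_congr {g : ℝ → ℝ} {A : Set ℝ} (hA : MeasurableSet A) (hfg : EqOn f g A) :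
    osc1 f A = osc1 g A := by
  have havg : ⨍ y in A, f y = ⨍ y in A, g y :=
    setAverage_congr_fun hA (ae_of_all _ fun x hx => hfg hx)
  rw [osc1, osc1, havg]
  exact setAverage_congr_fun hA (ae_of_all _ fun x hx => by rw [hfg hx])

lemma osc1_comp_preimage {φ : ℝ → ℝ} (hφ : MeasurePreserving φ volume volume)
    (hemb : MeasurableEmbedding φ) (f : ℝ → ℝ) (s : Set ℝ) :
    osc1 (fun x => f (φ x)) (φ ⁻¹' s) = osc1 f s := by
  have havg (g : ℝ → ℝ) : ⨍ x in φ ⁻¹' s, g (φ x) = ⨍ y in s, g y := by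
    rw [setAverage_eq, setAverage_eq, measureReal_def, measureReal_def,
      hφ.measure_preimage_emb hemb, hφ.setIntegral_preimage_emb hemb]
  simp only [osc1, havg f]
  exact havg fun y => |f y - ⨍ y in s, f y|

lemma osc1_comp_add_right (f : ℝ → ℝ) (t a b : ℝ) :
    osc1 (fun x => f (x + t)) (Icc a b) = osc1 f (Icc (a + t) (b + t)) := by
  simpa [preimage_add_const_Icc] using
    osc1_comp_preimage (measurePreserving_add_right volume t) (measurableEmbedding_addRight t) f
      (Icc (a + t) (b + t))

lemma osc1_comp_neg (f : ℝ → ℝ) (a b : ℝ) :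
    osc1 (fun x => f (-x)) (Icc a b) = osc1 f (Icc (-b) (-a)) := by
  simpa [neg_Icc] using
    osc1_comp_preimage (Measure.measurePreserving_neg volume) measurableEmbedding_neg f
      (Icc (-b) (-a))

lemma osc1_Icc_eq_intervalAverage (hab : a ≤ b) :
    osc1 f (Icc a b) = ⨍ x in a..b, |f x - ⨍ y in a..b, f y| := by
  have havg (g : ℝ → ℝ) : ⨍ x in Icc a b, g x = ⨍ x in a..b, g x := by
    rw [uIoc_of_le hab]
    exact setAverage_congr Ioc_ae_eq_Icc.symm
  simp only [osc1, havg]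

lemma intervalIntegral_abs_sub_average (hab : a < b) :
    ∫ x in a..b, |f x - ⨍ y in a..b, f y| = (b - a) * osc1 f (Icc a b) := by
  rw [osc1_Icc_eq_intervalAverage hab.le, interval_average_eq (fun x => |f x - ⨍ y in a..b, f y|),
    smul_eq_mul,
    mul_inv_cancel_left₀ (sub_ne_zero.2 hab.ne')]

lemma osc1_Icc_le (hab : a < b) (hf : IntervalIntegrable f volume a b) (c : ℝ) :
    osc1 f (Icc a b) ≤ 2 / (b - a) * ∫ x in a..b, |f x - c| := by
  set m := ⨍ y in a..b, f y with hm
  have hL : 0 < b - a := sub_pos.2 hab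
  have hfc : IntervalIntegrable (fun x => |f x - c|) volume a b :=
    (hf.sub intervalIntegrable_const).abs
  have hdev : (b - a) * |c - m| ≤ ∫ x in a..b, |f x - c| :=
    calc (b - a) * |c - m| = |∫ x in a..b, (c - f x)| := by
          rw [intervalIntegral.integral_sub intervalIntegrable_const hf,
            intervalIntegral.integral_const, hm, interval_average_eq, smul_eq_mul, smul_eq_mul,
            ← abs_of_pos hL, ← abs_mul, abs_of_pos hL]
          congr 1
          field_simp
      _ ≤ ∫ x in a..b, |c - f x| := intervalIntegral.abs_integral_le_integral_abs hab.le
      _ = ∫ x in a..b, |f x - c| := by simp_rw [abs_sub_comm]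
  have htri : ∫ x in a..b, |f x - m| ≤ ∫ x in a..b, (|f x - c| + |c - m|) :=
    intervalIntegral.integral_mono_on hab.le (hf.sub intervalIntegrable_const).abs
      (hfc.add intervalIntegrable_const) fun x _ => abs_sub_le _ _ _
  rw [intervalIntegral.integral_add hfc intervalIntegrable_const, intervalIntegral.integral_const,
    smul_eq_mul] at htri
  rw [osc1_Icc_eq_intervalAverage hab.le, interval_average_eq, smul_eq_mul, ← hm,
    div_mul_eq_mul_div, le_div_iff₀ hL, inv_mul_eq_div, div_mul_cancel₀ _ hL.ne']
  linarith

lemma osc1_Icc_le_of_subset {a' b' : ℝ} (hab : a < b) (ha : a' ≤ a) (hb : b ≤ b')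
    (hf : IntervalIntegrable f volume a' b') (c : ℝ) :
    osc1 f (Icc a b) ≤ 2 / (b - a) * ∫ x in a'..b', |f x - c| := by
  refine (osc1_Icc_le hab (hf.mono_set ?_) c).trans ?_
  · rw [uIcc_of_le hab.le, uIcc_of_le (ha.trans (hab.le.trans hb))]
    exact Icc_subset_Icc ha hb
  · exact mul_le_mul_of_nonneg_left (intervalIntegral.integral_mono_interval ha hab.le hb
      (ae_of_all _ fun _ => abs_nonneg _) (hf.sub intervalIntegrable_const).abs)
      (div_pos two_pos (sub_pos.2 hab)).le

end MeanOscillation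

section Symmetric

variable {g : ℝ → ℝ} {p m : ℝ}

lemma IntervalIntegrable.of_symmetric_about (hg : ∀ x, g (2 * p - x) = g x)
    (hint : IntervalIntegrable g volume (p - m) p) :
    IntervalIntegrable g volume p (p + m) := by
  have := (hint.comp_sub_left (2 * p)).symm
  simp only [hg] at this
  convert this using 1 <;> ring

lemma integral_eq_two_mul_of_symmetric_about (hg : ∀ x, g (2 * p - x) = g x)
    (hint : IntervalIntegrable g volume (p - m) p) :
    ∫ x in p - m..p + m, g x = 2 * ∫ x in p - m..p, g x := by
  have hright : ∫ x in p..p + m, g x = ∫ x in p - m..p, g x :=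
    calc ∫ x in p..p + m, g x = ∫ x in p..p + m, g (2 * p - x) := by simp only [hg]
      _ = ∫ x in p - m..p, g x := by
        rw [intervalIntegral.integral_comp_sub_left g (2 * p)]
        congr 1 <;> ring
  rw [← intervalIntegral.integral_add_adjacent_intervals hint (hint.of_symmetric_about hg),
    hright, two_mul]

variable {f : ℝ → ℝ} {a b : ℝ}

lemma osc1_Icc_le_of_symmetric_about (hf : ∀ x, f (2 * p - x) = f x)
    (hint : IntervalIntegrable f volume (p - (b - a)) p) (hab : a < b) (hap : a ≤ p)
    (hpb : p ≤ b) :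
    osc1 f (Icc a b) ≤ 4 * osc1 f (Icc (p - (b - a)) p) := by
  set c := ⨍ y in p - (b - a)..p, f y
  have hsymm : ∀ x, |f (2 * p - x) - c| = |f x - c| := fun x => by rw [hf]
  calc osc1 f (Icc a b)
      ≤ 2 / (b - a) * ∫ x in p - (b - a)..p + (b - a), |f x - c| :=
        osc1_Icc_le_of_subset hab (by linarith) (by linarith)
          (hint.trans (hint.of_symmetric_about hf)) c
    _ = 2 / (b - a) * (2 * ((b - a) * osc1 f (Icc (p - (b - a)) p))) := by
        rw [integral_eq_two_mul_of_symmetric_about hsymm (hint.sub intervalIntegrable_const).abs,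
          intervalIntegral_abs_sub_average (by linarith), sub_sub_cancel]
    _ = 4 * osc1 f (Icc (p - (b - a)) p) := by
        field_simp [(sub_pos.2 hab).ne']
        ring

end Symmetric

lemma locallyIntegrable_of_forall_intervalIntegrable {f : ℝ → ℝ}
    (hf : ∀ s t, IntervalIntegrable f volume s t) : LocallyIntegrable f volume := by
  refine locallyIntegrable_iff.2 fun K hK => ?_
  obtain ⟨r, hr, hKr⟩ := hK.isBounded.subset_closedBall_lt 0 0
  rw [Real.closedBall_eq_Icc, zero_sub, zero_add] at hKr
  exact ((intervalIntegrable_iff_integrableOn_Icc_of_le (by linarith)).1 (hf (-r) r)).mono_set hKr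

section EvenPeriodic

variable {f : ℝ → ℝ} {T a b : ℝ}

lemma Function.Periodic.symmetric_about_half (hper : Function.Periodic f T)
    (heven : ∀ x, f (-x) = f x) (x : ℝ) : f (2 * (T / 2) - x) = f x := by
  rw [mul_div_cancel₀ T two_ne_zero, sub_eq_neg_add, hper, heven]

lemma Function.Periodic.intervalIntegrable_of_even (hper : Function.Periodic f T)
    (heven : ∀ x, f (-x) = f x) (hT : T ≠ 0) (hint : IntervalIntegrable f volume 0 (T / 2))
    (s t : ℝ) : IntervalIntegrable f volume s t := by
  refine hper.intervalIntegrable₀ hT ?_ s t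
  have hright := (show IntervalIntegrable f volume (T / 2 - T / 2) (T / 2) by
    rwa [sub_self]).of_symmetric_about (hper.symmetric_about_half heven)
  rw [add_halves] at hright
  exact hint.trans hright

lemma osc1_Icc_add_zsmul_of_periodic (hper : Function.Periodic f T) (n : ℤ) :
    osc1 f (Icc (a + n • T) (b + n • T)) = osc1 f (Icc a b) := by
  rw [← osc1_comp_add_right, (hper.zsmul n).funext]

lemma osc1_Icc_neg_of_even (heven : ∀ x, f (-x) = f x) :
    osc1 f (Icc (-b) (-a)) = osc1 f (Icc a b) := by
  rw [← osc1_comp_neg, funext heven]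

lemma osc1_Icc_le_of_periodic_of_even (hT : 0 < T) (hper : Function.Periodic f T)
    (heven : ∀ x, f (-x) = f x) (hint : IntervalIntegrable f volume 0 (T / 2))
    (hab : a < b) (hlong : T ≤ 2 * (b - a)) :
    osc1 f (Icc a b) ≤ 6 * osc1 f (Icc 0 (T / 2)) := by
  set n : ℤ := ⌈(b - a) / T⌉
  set c := ⨍ y in 0..T / 2, f y
  set g := fun x => |f x - c|
  have hg_int : ∀ s t, IntervalIntegrable g volume s t := fun s t =>
    ((hper.intervalIntegrable_of_even heven hT.ne' hint s t).sub intervalIntegrable_const).abs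
  have hg_per : Function.Periodic g T := fun x => by simp only [g, hper x]
  have hperiod : ∫ x in 0..T, g x = 2 * ∫ x in 0..T / 2, g x := by
    have := integral_eq_two_mul_of_symmetric_about (g := g) (p := T / 2) (m := T / 2)
      (fun x => by simp only [g, hper.symmetric_about_half heven])
      (by rw [sub_self]; exact hg_int _ _)
    rwa [sub_self, add_halves] at this
  have hn : (b - a) / T ≤ n := Int.le_ceil _
  have hn' : (n : ℝ) < (b - a) / T + 1 := Int.ceil_lt_add_one _
  have hcover : b ≤ a + n • T := by
    rw [zsmul_eq_mul]
    have := (div_le_iff₀ hT).1 hn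
    linarith
  calc osc1 f (Icc a b) ≤ 2 / (b - a) * ∫ x in a..a + n • T, g x :=
        osc1_Icc_le_of_subset hab le_rfl hcover
          (hper.intervalIntegrable_of_even heven hT.ne' hint _ _) c
    _ = 2 / (b - a) * (n * T * osc1 f (Icc 0 (T / 2))) := by
        rw [hg_per.intervalIntegral_add_zsmul_eq n a hg_int, hg_per.intervalIntegral_add_eq a 0,
          zero_add, hperiod, intervalIntegral_abs_sub_average (by linarith), zsmul_eq_mul]
        ring
    _ ≤ 6 * osc1 f (Icc 0 (T / 2)) := by
        have hnT : n * T ≤ 3 * (b - a) := by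
          have := (lt_div_iff₀ hT).1 (show (n : ℝ) - 1 < (b - a) / T by linarith)
          nlinarith
        have hosc := osc1_nonneg f (Icc 0 (T / 2))
        rw [div_mul_eq_mul_div, div_le_iff₀ (by linarith)]
        nlinarith

lemma exists_osc1_Icc_le_of_short (hper : Function.Periodic f T) (heven : ∀ x, f (-x) = f x)
    (hint : ∀ s t, IntervalIntegrable f volume s t) (ha : -(T / 2) ≤ a) (ha' : a < T / 2)
    (hab : a < b) (hshort : 2 * (b - a) < T) :
    ∃ c d, c < d ∧ Icc c d ⊆ Icc 0 (T / 2) ∧ osc1 f (Icc a b) ≤ 4 * osc1 f (Icc c d) := by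
  have hosc := osc1_nonneg f (Icc a b)
  rcases le_or_gt b 0 with hb0 | hb0
  · refine ⟨-b, -a, by linarith, Icc_subset_Icc (by linarith) (by linarith), ?_⟩
    rw [osc1_Icc_neg_of_even heven]
    linarith
  rcases lt_or_ge a 0 with ha0 | ha0
  · refine ⟨0, b - a, by linarith, Icc_subset_Icc le_rfl (by linarith), ?_⟩
    have := osc1_Icc_le_of_symmetric_about (p := 0) (fun x => by rw [mul_zero, zero_sub, heven])
      (hint _ _) hab ha0.le hb0.le
    rwa [zero_sub, ← neg_zero, osc1_Icc_neg_of_even heven] at this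
  rcases le_or_gt b (T / 2) with hbT | hbT
  · exact ⟨a, b, hab, Icc_subset_Icc ha0 hbT, by linarith⟩
  · exact ⟨T / 2 - (b - a), T / 2, by linarith, Icc_subset_Icc (by linarith) le_rfl,
      osc1_Icc_le_of_symmetric_about (hper.symmetric_about_half heven) (hint _ _) hab ha'.le
        hbT.le⟩

lemma exists_osc1_Icc_le_of_periodic_of_even (hT : 0 < T) (hper : Function.Periodic f T)
    (heven : ∀ x, f (-x) = f x) (hint : IntervalIntegrable f volume 0 (T / 2)) (hab : a < b) :
    ∃ c d, c < d ∧ Icc c d ⊆ Icc 0 (T / 2) ∧ osc1 f (Icc a b) ≤ 6 * osc1 f (Icc c d) := by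
  rcases le_or_gt T (2 * (b - a)) with hlong | hshort
  · exact ⟨0, T / 2, by linarith, subset_rfl,
      osc1_Icc_le_of_periodic_of_even hT hper heven hint hab hlong⟩
  set n := toIcoDiv hT (-(T / 2)) a
  have hmod := toIcoMod_mem_Ico hT (-(T / 2)) a
  rw [toIcoMod, mem_Ico] at hmod
  obtain ⟨c, d, hcd, hsub, hle⟩ := exists_osc1_Icc_le_of_short hper heven
    (hper.intervalIntegrable_of_even heven hT.ne' hint) hmod.1 (by linarith)
    (by linarith : a - n • T < b - n • T) (by linarith)
  refine ⟨c, d, hcd, hsub, ?_⟩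
  rw [← osc1_Icc_add_zsmul_of_periodic hper n, sub_add_cancel, sub_add_cancel] at hle
  linarith [osc1_nonneg f (Icc c d)]

end EvenPeriodic

theorem even_periodic_extension_bmo_general
    (T : ℝ) (hT : 0 < T) (h : ℝ → ℝ)
    (hL1 : IntegrableOn h (Icc 0 (T / 2)) volume)
    (H : ℝ → ℝ)
    (hHeq : ∀ x ∈ Icc (0 : ℝ) (T / 2), H x = h x)
    (hHeven : ∀ x : ℝ, H (-x) = H x)
    (hHper : ∀ x : ℝ, H (x + T) = H x) :
    LocallyIntegrable H volume ∧ bmo1 H ≤ 10 * bmoOn h (Icc 0 (T / 2)) := by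
  have hint : IntervalIntegrable H volume 0 (T / 2) :=
    (intervalIntegrable_iff_integrableOn_Icc_of_le (by linarith)).2
      (hL1.congr_fun (fun x hx => (hHeq x hx).symm) measurableSet_Icc)
  refine ⟨locallyIntegrable_of_forall_intervalIntegrable
    (Function.Periodic.intervalIntegrable_of_even hHper hHeven hT.ne' hint), ?_⟩
  refine iSup₂_le fun a b => iSup_le fun hab => ?_
  obtain ⟨c, d, hcd, hsub, hle⟩ :=
    exists_osc1_Icc_le_of_periodic_of_even hT hHper hHeven hint hab
  calc ENNReal.ofReal (osc1 H (Icc a b)) ≤ ENNReal.ofReal (6 * osc1 h (Icc c d)) := by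
        rw [← osc1_congr measurableSet_Icc fun x hx => hHeq x (hsub hx)]
        exact ENNReal.ofReal_le_ofReal hle
    _ = 6 * ENNReal.ofReal (osc1 h (Icc c d)) := by
        rw [ENNReal.ofReal_mul (by norm_num), ENNReal.ofReal_ofNat]
    _ ≤ 6 * bmoOn h (Icc 0 (T / 2)) := by
        gcongr
        exact le_iSup₂_of_le c d (le_iSup₂_of_le (α := ℝ≥0∞) hcd hsub le_rfl)
    _ ≤ 10 * bmoOn h (Icc 0 (T / 2)) := by gcongr; norm_num

/-- the even `T`-periodic extension `H` of a function `h` of bounded mean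
oscillation on `[0, T/2]` belongs to `BMO(ℝ)` with `‖H‖_{BMO(ℝ)} ≤ 10 ‖h‖_{BMO[0,T/2]}`. -/
theorem even_periodic_extension_bmo
    (T : ℝ) (hT : 0 < T) (h : ℝ → ℝ)
    (hL1 : IntegrableOn h (Icc 0 (T / 2)) volume)
    (hbmo : bmoOn h (Icc 0 (T / 2)) ≠ ⊤)
    (H : ℝ → ℝ)
    (hHeq : ∀ x ∈ Icc (0 : ℝ) (T / 2), H x = h x)
    (hHeven : ∀ x : ℝ, H (-x) = H x)
    (hHper : ∀ x : ℝ, H (x + T) = H x) :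
    LocallyIntegrable H volume ∧ bmo1 H ≤ 10 * bmoOn h (Icc 0 (T / 2)) :=
  even_periodic_extension_bmo_general T hT h hL1 H hHeq hHeven hHper
end

section
/- For every c < −1 there exists a sequence of measurable functions g_n : ℝ → ℝ (n ≥ 1) such that: (1) g_n ≥ 0 everywhere; (2) g_n = 0 on [c,1]; (3) ‖g_n‖_{L∞(ℝ)} ≤ 1; (4) the averages (1/n) ∫_0^n g_n converge to 1 as n → ∞; (5) ‖g_n‖_{BMO(ℝ)} → 0 as n → ∞. -/
open MeasureTheory Set Filter
open scoped ENNReal Topology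

/-!
Take `g n x = min 1 (log⁺ (|x - c| / s) / log n)` with `s = 1 - c`, so that `g n` vanishes on
`[c - s, c + s] ⊇ [c, 1]`. On `[1, n]` it is at least `(log x - log s) / log n`, whose mean over
`[0, n]` is `1 - O(1 / log n)`.

Since `t ↦ min 1 t` is `1`-Lipschitz, `‖g n‖_BMO ≤ C / log n` once `log (max |x - c| s)` has
bounded mean oscillation. On `[a, b]` compare it with its maximum `log N` there. If
`N ≤ 2 (b - a)`, the deviation is dominated by `log N - log |x - c|`, whose integral over
`[c - N, c + N]` is `2 N`; otherwise `log (max |x - c| s)` varies by at most `log 2` on `[a, b]`.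
-/

open Real

section MeanOscillation

variable {α : Type*} [MeasurableSpace α] {μ : Measure α} [IsFiniteMeasure μ] {f : α → ℝ}

lemma integral_abs_sub_average_le (hf : Integrable f μ) (m : ℝ) :
    ∫ x, |f x - ⨍ y, f y ∂μ| ∂μ ≤ 2 * ∫ x, |f x - m| ∂μ := by
  set A := ⨍ y, f y ∂μ
  have hconst : ∀ k : ℝ, Integrable (fun _ : α => k) μ := integrable_const
  have hdev : Integrable (fun x => |f x - m|) μ := (hf.sub (hconst m)).abs
  have hmass : μ.real univ * |m - A| ≤ ∫ x, |f x - m| ∂μ :=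
    calc μ.real univ * |m - A| = |∫ x, (m - f x) ∂μ| := by
          rw [integral_sub (hconst m) hf, integral_const, ← measure_smul_average μ f,
            smul_eq_mul, smul_eq_mul, ← mul_sub, abs_mul, abs_of_nonneg measureReal_nonneg]
      _ ≤ ∫ x, |m - f x| ∂μ := abs_integral_le_integral_abs
      _ = ∫ x, |f x - m| ∂μ := by simp only [abs_sub_comm]
  calc ∫ x, |f x - A| ∂μ ≤ ∫ x, (|f x - m| + |m - A|) ∂μ :=
        integral_mono (hf.sub (hconst A)).abs (hdev.add (hconst _))
          fun x => abs_sub_le _ _ _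
    _ = ∫ x, |f x - m| ∂μ + μ.real univ * |m - A| := by
        rw [integral_add hdev (hconst _), integral_const, smul_eq_mul]
    _ ≤ 2 * ∫ x, |f x - m| ∂μ := by linarith

end MeanOscillation

lemma osc1_le_two_mul_setIntegral_abs_sub {f : ℝ → ℝ} {A : Set ℝ} (hA : volume A ≠ ∞)
    (hf : IntegrableOn f A) (m : ℝ) :
    osc1 f A ≤ 2 * ((volume.real A)⁻¹ * ∫ x in A, |f x - m|) := by
  have : Fact (volume A < ∞) := ⟨hA.lt_top⟩
  rw [osc1, setAverage_eq, smul_eq_mul, mul_left_comm]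
  exact mul_le_mul_of_nonneg_left (integral_abs_sub_average_le hf m)
    (inv_nonneg.2 measureReal_nonneg)

section LogDeviation

variable {a b c s x N : ℝ}

lemma intervalIntegrable_log_abs_sub (c u v : ℝ) :
    IntervalIntegrable (fun x => log |x - c|) volume u v := by
  simpa only [log_abs, sub_add_cancel] using
    (intervalIntegral.intervalIntegrable_log' (a := u - c) (b := v - c)).comp_sub_right c

lemma intervalIntegral_log_sub_log_abs_sub (c N : ℝ) :
    ∫ x in (c - N)..(c + N), (log N - log |x - c|) = 2 * N := by
  have hlog : ∫ x in (c - N)..(c + N), log |x - c| = 2 * N * log N - 2 * N := by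
    simp only [log_abs]
    rw [intervalIntegral.integral_comp_sub_right log c, integral_log]
    simp only [sub_sub_cancel_left, add_sub_cancel_left, log_neg_eq_log]
    ring
  rw [intervalIntegral.integral_sub intervalIntegrable_const
    (intervalIntegrable_log_abs_sub c _ _), hlog, intervalIntegral.integral_const,
    smul_eq_mul]
  ring

lemma continuous_log_max_abs_sub (hs : 0 < s) : Continuous fun x => log (max |x - c| s) :=
  ((continuous_id.sub continuous_const).abs.max continuous_const).log
    fun _ => (hs.trans_le (le_max_right _ _)).ne'

lemma setIntegral_log_sub_log_max_abs_sub_le (hs : 0 < s) (hN : 0 ≤ N) :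
    ∫ x in Icc (c - N) (c + N), (log N - log (max |x - c| s)) ≤ 2 * N := by
  have hle : c - N ≤ c + N := by linarith
  have hint : IntegrableOn (fun x => log N - log |x - c|) (Icc (c - N) (c + N)) :=
    (intervalIntegrable_iff_integrableOn_Icc_of_le hle).1
      (intervalIntegrable_const.sub (intervalIntegrable_log_abs_sub c _ _))
  calc ∫ x in Icc (c - N) (c + N), (log N - log (max |x - c| s))
      ≤ ∫ x in Icc (c - N) (c + N), (log N - log |x - c|) := by
        refine setIntegral_mono_on_ae ?_ hint measurableSet_Icc ?_
        · exact (continuous_const.sub (continuous_log_max_abs_sub hs)).integrableOn_Icc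
        · filter_upwards [volume.ae_ne c] with x hx _
          have := log_le_log (abs_pos.2 (sub_ne_zero.2 hx)) (le_max_left |x - c| s)
          linarith
    _ = 2 * N := by
        rw [integral_Icc_eq_integral_Ioc, ← intervalIntegral.integral_of_le hle,
          intervalIntegral_log_sub_log_abs_sub]

lemma max_abs_sub_le_of_mem_Icc (hx : x ∈ Icc a b) :
    max |x - c| s ≤ max (max |a - c| |b - c|) s :=
  max_le_max_right s (abs_le_max_abs_abs (by linarith [hx.1]) (by linarith [hx.2]))

lemma max_le_max_abs_sub_add_of_mem_Icc (hx : x ∈ Icc a b) :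
    max (max |a - c| |b - c|) s ≤ max |x - c| s + (b - a) := by
  have hxa : |a - x| ≤ b - a := abs_le.2 ⟨by linarith [hx.1, hx.2], by linarith [hx.1, hx.2]⟩
  have hxb : |b - x| ≤ b - a := abs_le.2 ⟨by linarith [hx.1, hx.2], by linarith [hx.1, hx.2]⟩
  have hM : |x - c| ≤ max |x - c| s := le_max_left _ _
  exact max_le (max_le (by linarith [abs_sub_le a x c]) (by linarith [abs_sub_le b x c]))
    (by linarith [le_max_right |x - c| s, hx.1, hx.2])

lemma setIntegral_abs_log_max_abs_sub_le (hs : 0 < s) (hab : a < b) :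
    ∫ x in Icc a b, |log (max |x - c| s) - log (max (max |a - c| |b - c|) s)|
      ≤ 4 * (b - a) := by
  set N := max (max |a - c| |b - c|) s
  have hN : 0 < N := hs.trans_le (le_max_right _ _)
  have hpos : ∀ x, 0 < max |x - c| s := fun x => hs.trans_le (le_max_right _ _)
  have hdev : ∀ x ∈ Icc a b, |log (max |x - c| s) - log N| = log N - log (max |x - c| s) :=
    fun x hx => by
      rw [abs_sub_comm, abs_of_nonneg (sub_nonneg.2
        (log_le_log (hpos x) (max_abs_sub_le_of_mem_Icc hx)))]
  rw [setIntegral_congr_fun measurableSet_Icc hdev]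
  rcases le_or_gt N (2 * (b - a)) with hnear | hfar
  · have hsub : Icc a b ⊆ Icc (c - N) (c + N) := fun x hx => by
      have := (le_max_left _ _).trans (max_abs_sub_le_of_mem_Icc (s := s) (c := c) hx)
      constructor <;> linarith [abs_le.1 this]
    calc ∫ x in Icc a b, (log N - log (max |x - c| s))
        ≤ ∫ x in Icc (c - N) (c + N), (log N - log (max |x - c| s)) := by
          refine setIntegral_mono_set
            (continuous_const.sub (continuous_log_max_abs_sub hs)).integrableOn_Icc ?_
            hsub.eventuallyLE
          refine (ae_restrict_iff' measurableSet_Icc).2 (ae_of_all _ fun x hx => ?_)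
          exact sub_nonneg.2 (log_le_log (hpos x)
            (max_le (abs_le.2 ⟨by linarith [hx.1], by linarith [hx.2]⟩) (le_max_right _ _)))
      _ ≤ 2 * N := setIntegral_log_sub_log_max_abs_sub_le hs hN.le
      _ ≤ 4 * (b - a) := by linarith
  · have hvar : ∀ x ∈ Icc a b, log N - log (max |x - c| s) ≤ 1 := fun x hx => by
      have hNM := max_le_max_abs_sub_add_of_mem_Icc (s := s) (c := c) hx
      have hratio : N / max |x - c| s ≤ 2 := (div_le_iff₀ (hpos x)).2 (by linarith)
      rw [← log_div hN.ne' (hpos x).ne']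
      linarith [log_le_sub_one_of_pos (div_pos hN (hpos x))]
    calc ∫ x in Icc a b, (log N - log (max |x - c| s))
        ≤ ∫ _ in Icc a b, (1 : ℝ) :=
          setIntegral_mono_on
            (continuous_const.sub (continuous_log_max_abs_sub hs)).integrableOn_Icc
            (continuous_const.integrableOn_Icc) measurableSet_Icc hvar
      _ = b - a := by simp [hab.le]
      _ ≤ 4 * (b - a) := by linarith

end LogDeviation

noncomputable def clippedLog (c s L x : ℝ) : ℝ :=
  min 1 ((log (max |x - c| s) - log s) / L)

section ClippedLog

variable {a b c s L : ℝ}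

lemma continuous_clippedLog (hs : 0 < s) : Continuous (clippedLog c s L) :=
  continuous_const.min (((continuous_log_max_abs_sub hs).sub continuous_const).div_const L)

lemma clippedLog_le_one (x : ℝ) : clippedLog c s L x ≤ 1 := min_le_left _ _

lemma clippedLog_nonneg (hs : 0 < s) (hL : 0 ≤ L) (x : ℝ) : 0 ≤ clippedLog c s L x :=
  le_min zero_le_one
    (div_nonneg (sub_nonneg.2 (log_le_log hs (le_max_right _ _))) hL)

lemma clippedLog_eq_zero {x : ℝ} (hx : |x - c| ≤ s) : clippedLog c s L x = 0 := by
  simp [clippedLog, max_eq_right hx]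

lemma osc1_clippedLog_le (hs : 0 < s) (hL : 0 < L) (hab : a < b) :
    osc1 (clippedLog c s L) (Icc a b) ≤ 8 / L := by
  set N := max (max |a - c| |b - c|) s
  set m := min 1 ((log N - log s) / L)
  have hlen : volume.real (Icc a b) = b - a := by simp [hab.le]
  have htrunc : ∀ x ∈ Icc a b,
      |clippedLog c s L x - m| ≤ |log (max |x - c| s) - log N| / L := fun x _ => by
    calc |clippedLog c s L x - m|
        ≤ max |1 - 1| |(log (max |x - c| s) - log s) / L - (log N - log s) / L| :=
          abs_min_sub_min_le_max _ _ _ _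
      _ = |(log (max |x - c| s) - log s) / L - (log N - log s) / L| := by simp
      _ = |log (max |x - c| s) - log N| / L := by
          rw [div_sub_div_same, sub_sub_sub_cancel_right, abs_div, abs_of_pos hL]
  have hint : ∫ x in Icc a b, |clippedLog c s L x - m| ≤ 4 * (b - a) / L :=
    calc ∫ x in Icc a b, |clippedLog c s L x - m|
        ≤ ∫ x in Icc a b, |log (max |x - c| s) - log N| / L :=
          setIntegral_mono_on
            ((continuous_clippedLog hs).sub continuous_const).abs.integrableOn_Icc
            (((continuous_log_max_abs_sub hs).sub continuous_const).abs.div_const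
              L).integrableOn_Icc
            measurableSet_Icc htrunc
      _ = (∫ x in Icc a b, |log (max |x - c| s) - log N|) / L := integral_div L _
      _ ≤ 4 * (b - a) / L := by gcongr; exact setIntegral_abs_log_max_abs_sub_le hs hab
  calc osc1 (clippedLog c s L) (Icc a b)
      ≤ 2 * ((volume.real (Icc a b))⁻¹ * ∫ x in Icc a b, |clippedLog c s L x - m|) :=
        osc1_le_two_mul_setIntegral_abs_sub (by simp)
          (continuous_clippedLog hs).integrableOn_Icc m
    _ ≤ 2 * ((b - a)⁻¹ * (4 * (b - a) / L)) := by
        rw [hlen]; gcongr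
    _ = 8 / L := by field_simp [(sub_pos.2 hab).ne']; ring

lemma bmo1_clippedLog_le (hs : 0 < s) (hL : 0 < L) :
    bmo1 (clippedLog c s L) ≤ ENNReal.ofReal (8 / L) :=
  iSup₂_le fun _ _ => iSup_le fun hab => ENNReal.ofReal_le_ofReal (osc1_clippedLog_le hs hL hab)

end ClippedLog

section Average

variable {c s : ℝ} {n : ℝ}

lemma setAverage_Icc_clippedLog_le_one (L : ℝ) (hs : 0 < s) (hn : 0 < n) :
    ⨍ x in Icc 0 n, clippedLog c s L x ≤ 1 := by
  have hle : ∫ x in Icc 0 n, clippedLog c s L x ≤ ∫ _ in Icc 0 n, (1 : ℝ) :=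
    setIntegral_mono_on (continuous_clippedLog hs).integrableOn_Icc
      continuous_const.integrableOn_Icc measurableSet_Icc fun x _ => clippedLog_le_one x
  rw [setAverage_eq, smul_eq_mul, inv_mul_le_iff₀ (by simpa using hn)]
  simpa using hle

lemma log_sub_log_div_le_clippedLog (hc : c ≤ 0) (hs : 1 ≤ s) {x : ℝ} (hx : x ∈ Icc 1 n) :
    (log x - log s) / log n ≤ clippedLog c s (log n) x := by
  have hx0 : 0 < x := zero_lt_one.trans_le hx.1
  have hlogn : 0 ≤ log n := log_nonneg (hx.1.trans hx.2)
  have hlogx : log x ≤ log (max |x - c| s) :=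
    log_le_log hx0 (le_max_of_le_left (by rw [abs_of_pos (by linarith)]; linarith))
  refine le_min (div_le_one_of_le₀ ?_ hlogn) (div_le_div_of_nonneg_right (by linarith) hlogn)
  linarith [log_le_log hx0 hx.2, log_nonneg hs]

lemma one_sub_div_log_le_setAverage_clippedLog (hc : c ≤ 0) (hs : 1 ≤ s) (hn : 1 < n) :
    1 - (1 + log s) / log n ≤ ⨍ x in Icc 0 n, clippedLog c s (log n) x := by
  have hs0 : 0 < s := zero_lt_one.trans_le hs
  have hn0 : 0 < n := zero_lt_one.trans hn
  have hlogn : 0 < log n := log_pos hn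
  have hcont := continuous_clippedLog (c := c) (L := log n) hs0
  have hlog_int : ∫ x in Icc 1 n, (log x - log s) / log n
      = (n * log n - n + 1 - (n - 1) * log s) / log n := by
    rw [integral_Icc_eq_integral_Ioc, ← intervalIntegral.integral_of_le hn.le,
      intervalIntegral.integral_div, intervalIntegral.integral_sub
        intervalIntegral.intervalIntegrable_log' intervalIntegrable_const, integral_log]
    simp
  have hint : (n * log n - n + 1 - (n - 1) * log s) / log n
      ≤ ∫ x in Icc 0 n, clippedLog c s (log n) x :=
    calc (n * log n - n + 1 - (n - 1) * log s) / log n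
        = ∫ x in Icc 1 n, (log x - log s) / log n := hlog_int.symm
      _ ≤ ∫ x in Icc 1 n, clippedLog c s (log n) x := by
          refine setIntegral_mono_on ?_ hcont.integrableOn_Icc measurableSet_Icc
            fun x hx => log_sub_log_div_le_clippedLog hc hs hx
          exact ((continuousOn_log.mono fun x hx => (zero_lt_one.trans_le hx.1).ne').sub
            continuousOn_const).div_const _ |>.integrableOn_Icc
      _ ≤ ∫ x in Icc 0 n, clippedLog c s (log n) x :=
          setIntegral_mono_set hcont.integrableOn_Icc
            ((ae_restrict_iff' measurableSet_Icc).2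
              (ae_of_all _ fun x _ => clippedLog_nonneg hs0 hlogn.le x))
            (Icc_subset_Icc_left zero_le_one).eventuallyLE
  have hsplit : n⁻¹ * ((n * log n - n + 1 - (n - 1) * log s) / log n)
      = 1 - (1 + log s) / log n + (1 + log s) / (n * log n) := by
    field_simp
    ring
  have hrem : 0 ≤ (1 + log s) / (n * log n) := by
    have := log_nonneg hs
    positivity
  rw [setAverage_eq, smul_eq_mul, show volume.real (Icc 0 n) = n by simp [hn0.le]]
  calc 1 - (1 + log s) / log n ≤ n⁻¹ * ((n * log n - n + 1 - (n - 1) * log s) / log n) := by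
        linarith
    _ ≤ n⁻¹ * ∫ x in Icc 0 n, clippedLog c s (log n) x := by gcongr

end Average

/-- for every `c < -1` there is a sequence of measurable functions `g n`
(`n ≥ 1`) that are nonnegative, vanish on `[c, 1]`, are bounded by `1`, whose averages
over `[0, n]` tend to `1`, and whose `BMO(ℝ)` seminorms tend to `0`. -/
theorem exists_gn_sequence (c : ℝ) (hc : c < -1) :
    ∃ g : ℕ → ℝ → ℝ,
      (∀ n : ℕ, 1 ≤ n → Measurable (g n)) ∧
      (∀ n : ℕ, 1 ≤ n → ∀ x : ℝ, 0 ≤ g n x) ∧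
      (∀ n : ℕ, 1 ≤ n → ∀ x ∈ Icc c 1, g n x = 0) ∧
      (∀ n : ℕ, 1 ≤ n → ∀ x : ℝ, |g n x| ≤ 1) ∧
      Tendsto (fun n : ℕ => ⨍ x in Icc (0 : ℝ) (n : ℝ), g n x) atTop (𝓝 1) ∧
      Tendsto (fun n : ℕ => bmo1 (g n)) atTop (𝓝 0) := by
  have hs : 0 < 1 - c := by linarith
  have hlog_nonneg (n : ℕ) (hn : 1 ≤ n) : 0 ≤ log n := log_nonneg (by exact_mod_cast hn)
  have hlog_top : Tendsto (fun n : ℕ => log n) atTop atTop :=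
    tendsto_log_atTop.comp tendsto_natCast_atTop_atTop
  refine ⟨fun n => clippedLog c (1 - c) (log n), fun n _ => (continuous_clippedLog hs).measurable,
    fun n hn => clippedLog_nonneg hs (hlog_nonneg n hn),
    fun n _ x hx => clippedLog_eq_zero (abs_le.2 ⟨by linarith [hx.1], by linarith [hx.2]⟩),
    fun n hn x => abs_le.2 ⟨by linarith [clippedLog_nonneg (c := c) hs (hlog_nonneg n hn) x],
      clippedLog_le_one x⟩, ?_, ?_⟩
  · have hlower : Tendsto (fun n : ℕ => 1 - (1 + log (1 - c)) / log n) atTop (𝓝 1) := by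
      simpa using tendsto_const_nhds.sub (tendsto_const_nhds.div_atTop hlog_top)
    refine tendsto_of_tendsto_of_tendsto_of_le_of_le' hlower tendsto_const_nhds ?_ ?_
    · filter_upwards [eventually_gt_atTop 1] with n hn
      exact one_sub_div_log_le_setAverage_clippedLog (by linarith) (by linarith)
        (by exact_mod_cast hn)
    · filter_upwards [eventually_gt_atTop 0] with n hn
      exact setAverage_Icc_clippedLog_le_one _ hs (by exact_mod_cast hn)
  · have hupper : Tendsto (fun n : ℕ => ENNReal.ofReal (8 / log n)) atTop (𝓝 0) := by
      simpa using ENNReal.tendsto_ofReal (tendsto_const_nhds.div_atTop hlog_top)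
    refine tendsto_of_tendsto_of_tendsto_of_le_of_le' tendsto_const_nhds hupper
      (Eventually.of_forall fun _ => bot_le) ?_
    filter_upwards [hlog_top.eventually_gt_atTop 0] with n hn
    exact bmo1_clippedLog_le hs hn
end

section
/- Let f : ℝ → ℝ be nonnegative, supported in [0,1], with ‖f‖_{L∞} ≤ 1, and set a = ∫_0^1 f. Let c < 0 and let g : ℝ → ℝ be nonnegative measurable with g = 0 on [c,1] and ‖g‖_{L∞} ≤ 1. Then for every x ∈ [c,0] one has M(f + (a/(1−c))·g)(x) = Mf(x), where M is the one-dimensional uncentered Hardy–Littlewood maximal operator. -/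
/-!
Write `M = Mf(x)` and `λ = a / (1 - c)`. Since `f` vanishes off `[c, 1]`, `λ` is the average
of `f` over `[c, 1] ∋ x`, so `λ ≤ M`. An interval `I ∋ x` splits into `I ∩ [c, 1]`, an interval
through `x` (or a point) on which `f + λ g = f` has integral at most `M |I ∩ [c, 1]|`, and
`I \ [c, 1]`, on which `f + λ g = λ g ≤ λ ≤ M`. Hence every average of `f + λ g` over an interval
containing `x` is at most `M`, and the reverse inequality holds because `f ≤ f + λ g`.
-/

open MeasureTheory Set Filter
open scoped ENNReal Topology

/-- The one-dimensional uncentered Hardy–Littlewood maximal function: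
`M f x` is the supremum of the averages of `|f|` over closed intervals of positive
length containing `x`. -/
noncomputable def maxFun1 (f : ℝ → ℝ) (x : ℝ) : ℝ :=
  sSup {r : ℝ | ∃ a b : ℝ, a < b ∧ x ∈ Icc a b ∧ r = ⨍ t in Icc a b, |f t|}

section MaxFun1

variable {f : ℝ → ℝ} {C x a b : ℝ}

lemma setAverage_Icc_eq (f : ℝ → ℝ) (hab : a ≤ b) :
    ⨍ t in Icc a b, f t = (b - a)⁻¹ * ∫ t in Icc a b, f t := by
  rw [setAverage_eq, Real.volume_real_Icc_of_le hab, smul_eq_mul]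

lemma integrableOn_Icc_of_abs_le (hf : Measurable f) (hC : ∀ t, |f t| ≤ C) :
    IntegrableOn f (Icc a b) :=
  Measure.integrableOn_of_bounded (by simp) hf.aestronglyMeasurable (M := C)
    (ae_of_all _ fun t => (Real.norm_eq_abs _).trans_le (hC t))

lemma setAverage_Icc_abs_le (hC : ∀ t, |f t| ≤ C) (hab : a < b) :
    ⨍ t in Icc a b, |f t| ≤ C := by
  have hint : ‖∫ t in Icc a b, |f t|‖ ≤ C * volume.real (Icc a b) :=
    norm_setIntegral_le_of_norm_le_const (by simp) fun t _ => by simpa using hC t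
  rw [Real.volume_real_Icc_of_le hab.le] at hint
  rw [setAverage_Icc_eq _ hab.le, inv_mul_le_iff₀ (sub_pos.2 hab)]
  exact (Real.le_norm_self _).trans (hint.trans_eq (mul_comm _ _))

lemma setAverage_Icc_le_maxFun1 (hC : ∀ t, |f t| ≤ C) (hab : a < b) (hx : x ∈ Icc a b) :
    ⨍ t in Icc a b, |f t| ≤ maxFun1 f x :=
  le_csSup ⟨C, by rintro _ ⟨u, v, huv, -, rfl⟩; exact setAverage_Icc_abs_le hC huv⟩
    ⟨a, b, hab, hx, rfl⟩

lemma maxFun1_le {M : ℝ} (h : ∀ a b, a < b → x ∈ Icc a b → ⨍ t in Icc a b, |f t| ≤ M) :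
    maxFun1 f x ≤ M :=
  csSup_le ⟨_, x, x + 1, by linarith, ⟨le_rfl, by linarith⟩, rfl⟩
    (by rintro _ ⟨a, b, hab, hx, rfl⟩; exact h a b hab hx)

lemma setIntegral_Icc_abs_le_maxFun1_mul (hC : ∀ t, |f t| ≤ C) (hab : a ≤ b)
    (hx : x ∈ Icc a b) : ∫ t in Icc a b, |f t| ≤ maxFun1 f x * (b - a) := by
  rcases hab.eq_or_lt with rfl | hab
  · simp
  · have h := setAverage_Icc_le_maxFun1 hC hab hx
    rwa [setAverage_Icc_eq _ hab.le, inv_mul_le_iff₀ (sub_pos.2 hab), mul_comm] at h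

lemma maxFun1_mono {h : ℝ → ℝ} (hh : Measurable h) (hC : ∀ t, |h t| ≤ C)
    (hfh : ∀ t, |f t| ≤ |h t|) : maxFun1 f x ≤ maxFun1 h x :=
  maxFun1_le fun a b hab hx => by
    refine le_trans ?_ (setAverage_Icc_le_maxFun1 hC hab hx)
    rw [setAverage_Icc_eq _ hab.le, setAverage_Icc_eq _ hab.le]
    refine mul_le_mul_of_nonneg_left ?_ (inv_nonneg.2 (sub_pos.2 hab).le)
    exact integral_mono_of_nonneg (ae_of_all _ fun t => abs_nonneg _)
      (integrableOn_Icc_of_abs_le hh.abs fun t => (abs_abs (h t)).trans_le (hC t))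
      (ae_of_all _ hfh)

variable {φ : ℝ → ℝ} {c d : ℝ}

lemma setIntegral_Icc_abs_add_le_maxFun1_mul (hf : Measurable f) (hC : ∀ t, |f t| ≤ C)
    (hfS : ∀ t ∉ Icc c d, f t = 0) (hx : x ∈ Icc c d) (hφ : Measurable φ)
    (hφ0 : ∀ t, 0 ≤ φ t) (hφS : ∀ t ∈ Icc c d, φ t = 0) (hφM : ∀ t, φ t ≤ maxFun1 f x)
    {u v : ℝ} (huv : u ≤ v) (hxI : x ∈ Icc u v) :
    ∫ t in Icc u v, (|f t| + φ t) ≤ maxFun1 f x * (v - u) := by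
  set M := maxFun1 f x
  have hφC : ∀ t, |φ t| ≤ M := fun t => (abs_of_nonneg (hφ0 t)).trans_le (hφM t)
  have hint : IntegrableOn (fun t => |f t| + φ t) (Icc u v) :=
    (integrableOn_Icc_of_abs_le hf hC).abs.add (integrableOn_Icc_of_abs_le hφ hφC)
  have hx_inter : x ∈ Icc (max u c) (min v d) := ⟨max_le hxI.1 hx.1, le_min hxI.2 hx.2⟩
  have hinter : ∫ t in Icc u v ∩ Icc c d, |f t| ≤ M * volume.real (Icc u v ∩ Icc c d) := by
    rw [Icc_inter_Icc, Real.volume_real_Icc_of_le (hx_inter.1.trans hx_inter.2)]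
    exact setIntegral_Icc_abs_le_maxFun1_mul hC (hx_inter.1.trans hx_inter.2) hx_inter
  have hsdiff : ∫ t in Icc u v \ Icc c d, φ t ≤ M * volume.real (Icc u v \ Icc c d) :=
    (Real.le_norm_self _).trans <| norm_setIntegral_le_of_norm_le_const
      ((measure_mono sdiff_subset).trans_lt measure_Icc_lt_top) fun t _ => hφC t
  calc ∫ t in Icc u v, (|f t| + φ t)
      = (∫ t in Icc u v ∩ Icc c d, (|f t| + φ t)) + ∫ t in Icc u v \ Icc c d, (|f t| + φ t) :=
        (integral_inter_add_sdiff measurableSet_Icc hint).symm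
    _ = (∫ t in Icc u v ∩ Icc c d, |f t|) + ∫ t in Icc u v \ Icc c d, φ t := by
        congr 1
        · exact setIntegral_congr_fun (measurableSet_Icc.inter measurableSet_Icc)
            fun t ht => by simp [hφS t ht.2]
        · exact setIntegral_congr_fun (measurableSet_Icc.diff measurableSet_Icc)
            fun t ht => by simp [hfS t ht.2]
    _ ≤ M * volume.real (Icc u v ∩ Icc c d) + M * volume.real (Icc u v \ Icc c d) :=
        add_le_add hinter hsdiff
    _ = M * (v - u) := by
        rw [← mul_add, measureReal_inter_add_sdiff measurableSet_Icc (by simp),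
          Real.volume_real_Icc_of_le huv]

theorem maxFun1_abs_add_eq (hf : Measurable f) (hC : ∀ t, |f t| ≤ C)
    (hfS : ∀ t ∉ Icc c d, f t = 0) (hx : x ∈ Icc c d) (hφ : Measurable φ)
    (hφ0 : ∀ t, 0 ≤ φ t) (hφS : ∀ t ∈ Icc c d, φ t = 0) (hφM : ∀ t, φ t ≤ maxFun1 f x) :
    maxFun1 (fun t => |f t| + φ t) x = maxFun1 f x := by
  have hG : ∀ t, |(|f t| + φ t)| = |f t| + φ t :=
    fun t => abs_of_nonneg (add_nonneg (abs_nonneg _) (hφ0 t))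
  refine le_antisymm (maxFun1_le fun u v huv hxI => ?_) ?_
  · simp only [hG]
    rw [setAverage_Icc_eq _ huv.le, inv_mul_le_iff₀ (sub_pos.2 huv), mul_comm]
    exact setIntegral_Icc_abs_add_le_maxFun1_mul hf hC hfS hx hφ hφ0 hφS hφM huv.le hxI
  · refine maxFun1_mono (C := C + maxFun1 f x) (hf.abs.add hφ) (fun t => ?_) (fun t => ?_)
    · rw [hG]; linarith [hC t, hφM t]
    · rw [hG]; linarith [hφ0 t, le_abs_self (f t)]

end MaxFun1

/-- if `f` is nonnegative, supported in `[0,1]`, bounded by `1`,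
`a = ∫_0^1 f`, `c < 0`, and `g` is nonnegative, vanishes on `[c,1]` and is bounded
by `1`, then `M(f + (a/(1-c))·g) = M f` on `[c,0]`. -/
theorem maxFun_perturbation_eq
    (f : ℝ → ℝ) (hfm : Measurable f) (hf0 : ∀ x, 0 ≤ f x)
    (hfsupp : ∀ x ∉ Icc (0 : ℝ) 1, f x = 0) (hfbd : ∀ x, f x ≤ 1)
    (c : ℝ) (hc : c < 0)
    (g : ℝ → ℝ) (hgm : Measurable g) (hg0 : ∀ x, 0 ≤ g x)
    (hgsupp : ∀ x ∈ Icc c (1 : ℝ), g x = 0) (hgbd : ∀ x, g x ≤ 1) :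
    ∀ x ∈ Icc c (0 : ℝ),
      maxFun1 (fun t => f t + ((∫ s in Icc (0 : ℝ) 1, f s) / (1 - c)) * g t) x
        = maxFun1 f x := by
  intro x hx
  set lam := (∫ s in Icc (0 : ℝ) 1, f s) / (1 - c) with hlam
  have hf_abs : ∀ t, |f t| = f t := fun t => abs_of_nonneg (hf0 t)
  have hfC : ∀ t, |f t| ≤ 1 := fun t => (hf_abs t).trans_le (hfbd t)
  have hfS : ∀ t ∉ Icc c 1, f t = 0 :=
    fun t ht => hfsupp t fun h => ht (Icc_subset_Icc hc.le le_rfl h)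
  have hxS : x ∈ Icc c 1 := ⟨hx.1, hx.2.trans zero_le_one⟩
  have hlam0 : 0 ≤ lam :=
    div_nonneg (setIntegral_nonneg measurableSet_Icc fun t _ => hf0 t) (by linarith)
  have hlam_avg : ⨍ t in Icc c 1, |f t| = lam := by
    rw [setAverage_Icc_eq _ (by linarith), hlam, div_eq_inv_mul]
    simp only [hf_abs]
    rw [setIntegral_eq_of_subset_of_forall_sdiff_eq_zero measurableSet_Icc
      (Icc_subset_Icc hc.le le_rfl) fun t ht => hfsupp t ht.2]
  have hlam_le : lam ≤ maxFun1 f x :=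
    hlam_avg ▸ setAverage_Icc_le_maxFun1 hfC (by linarith) hxS
  have hf_eq : (fun t => f t + lam * g t) = fun t => |f t| + lam * g t := by
    simp only [hf_abs]
  rw [hf_eq]
  exact maxFun1_abs_add_eq hfm hfC hfS hxS (hgm.const_mul lam)
    (fun t => mul_nonneg hlam0 (hg0 t)) (fun t ht => by simp [hgsupp t ht])
    (fun t => (mul_le_of_le_one_right hlam0 (hgbd t)).trans hlam_le)
end

section
/- There exists a dimensional constant C(n) such that: if Q ⊂ ℝⁿ is a closed axis-parallel cube, A ⊆ Q is measurable with |A| > 0, and f is locally integrable with ‖f‖_{BMO(ℝⁿ)} ≤ 1, then (1/|A|) ∫_A |f − f_Q| ≤ C(n) (1 + log(|Q|/|A|)), where f_Q = (1/|Q|) ∫_Q f. -/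
open MeasureTheory Set Filter
open scoped ENNReal Topology

/-- Mean oscillation of `f` over `A ⊆ ℝⁿ`. -/
noncomputable def oscN {n : ℕ} (f : (Fin n → ℝ) → ℝ) (A : Set (Fin n → ℝ)) : ℝ :=
  ⨍ x in A, |f x - ⨍ y in A, f y|

/-- The closed axis-parallel cube with lower corner `a` and side length `l`. -/
def cube {n : ℕ} (a : Fin n → ℝ) (l : ℝ) : Set (Fin n → ℝ) :=
  Set.Icc a (fun i => a i + l)

/-- BMO(ℝⁿ) seminorm. -/
noncomputable def bmoN {n : ℕ} (f : (Fin n → ℝ) → ℝ) : ℝ≥0∞ :=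
  ⨆ (a : Fin n → ℝ) (l : ℝ) (_ : 0 < l), ENNReal.ofReal (oscN f (cube a l))

/-!
The John–Nirenberg inequality. Run the Calderón–Zygmund stopping time at height `2` for
`|f - f_Q|` on the dyadic subcubes of `Q`: off the stopping cubes `|f - f_Q| ≤ 2` a.e. by Lebesgue
differentiation, the stopping cubes cover at most half of `Q`, and on each of them the average of
`f` is within `2ⁿ⁺¹` of `f_Q`. Iterating inside the stopping cubes gives
`|{x ∈ Q : |f - f_Q| > 2ⁿ⁺¹ k}| ≤ 2⁻ᵏ |Q|`. Summing over the layers, bounding the first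
`K ≈ log₂ (|Q| / |A|)` of them by `|A|` and the rest by the geometric tail, gives
`∫_A |f - f_Q| ≤ 2ⁿ⁺¹ (K + 2) |A|`.
-/

open Metric

variable {n : ℕ}

lemma mem_cube {a x : Fin n → ℝ} {l : ℝ} :
    x ∈ cube a l ↔ ∀ i, a i ≤ x i ∧ x i ≤ a i + l := by
  simp only [cube, mem_Icc, Pi.le_def, forall_and]

lemma cube_eq_closedBall (a : Fin n → ℝ) {l : ℝ} (hl : 0 ≤ l) :
    cube a l = closedBall (fun i => a i + l / 2) (l / 2) := by
  ext x
  simp only [closedBall_pi _ (by linarith : 0 ≤ l / 2), mem_cube, Set.mem_pi, mem_univ,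
    forall_true_left, Real.closedBall_eq_Icc, mem_Icc]
  exact forall_congr' fun i => by constructor <;> rintro ⟨h₁, h₂⟩ <;> constructor <;> linarith

lemma measurableSet_cube (a : Fin n → ℝ) (l : ℝ) : MeasurableSet (cube a l) :=
  measurableSet_Icc

lemma volume_cube (a : Fin n → ℝ) (l : ℝ) : volume (cube a l) = ENNReal.ofReal l ^ n := by
  simp [cube, Real.volume_Icc_pi]

lemma volume_cube_ne_zero (a : Fin n → ℝ) {l : ℝ} (hl : 0 < l) : volume (cube a l) ≠ 0 := by
  simp [volume_cube, hl]

lemma volume_cube_ne_top (a : Fin n → ℝ) (l : ℝ) : volume (cube a l) ≠ ∞ := by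
  simp [volume_cube]

lemma volume_setOf_apply_eq (i : Fin n) (c : ℝ) : volume {x : Fin n → ℝ | x i = c} = 0 := by
  rw [volume_pi]
  exact Measure.pi_eval_preimage_null (fun _ : Fin n => (volume : Measure ℝ)) (i := i)
    (s := {c}) (measure_singleton c)

noncomputable def childCorner (a : Fin n → ℝ) (l : ℝ) (v : Fin n → Bool) : Fin n → ℝ :=
  fun i => a i + if v i then l / 2 else 0

noncomputable def childIndex (a : Fin n → ℝ) (l : ℝ) (x : Fin n → ℝ) : Fin n → Bool :=
  fun i => decide (a i + l / 2 ≤ x i)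

section Children

variable {a x : Fin n → ℝ} {l : ℝ}

lemma cube_childCorner_subset (hl : 0 ≤ l) (v : Fin n → Bool) :
    cube (childCorner a l v) (l / 2) ⊆ cube a l := by
  intro x hx
  simp only [mem_cube, childCorner] at hx ⊢
  intro i
  obtain ⟨h₁, h₂⟩ := hx i
  split_ifs at h₁ h₂ <;> constructor <;> linarith

lemma mem_cube_childCorner_childIndex (hx : x ∈ cube a l) :
    x ∈ cube (childCorner a l (childIndex a l x)) (l / 2) := by
  simp only [mem_cube, childCorner, childIndex, decide_eq_true_eq] at hx ⊢
  intro i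
  obtain ⟨h₁, h₂⟩ := hx i
  split_ifs <;> constructor <;> linarith

lemma volume_cube_childCorner_inter {v w : Fin n → Bool} (hvw : v ≠ w) :
    volume (cube (childCorner a l v) (l / 2) ∩ cube (childCorner a l w) (l / 2)) = 0 := by
  obtain ⟨i, hi⟩ := Function.ne_iff.1 hvw
  refine measure_mono_null (fun x hx => ?_) (volume_setOf_apply_eq i (a i + l / 2))
  simp only [mem_inter_iff, mem_cube, childCorner] at hx
  obtain ⟨⟨h₁, h₂⟩, ⟨h₃, h₄⟩⟩ := And.intro (hx.1 i) (hx.2 i)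
  show x i = a i + l / 2
  cases hv : v i <;> cases hw : w i <;> simp only [hv, hw] at h₁ h₂ h₃ h₄ hi <;>
    first | exact absurd rfl hi | (norm_num at h₁ h₂ h₃ h₄; linarith)

end Children

/- Dyadic subcubes of `cube a l` are addressed by lists: the `k`-th letter chooses one of the `2ⁿ`
children at generation `k`, so the prefixes of an address are the addresses of the ancestors. -/
noncomputable def dyadicCorner : (Fin n → ℝ) → ℝ → List (Fin n → Bool) → Fin n → ℝ
  | a, _, [] => a
  | a, l, v :: w => dyadicCorner (childCorner a l v) (l / 2) w

noncomputable def dyadicCube (a : Fin n → ℝ) (l : ℝ) (w : List (Fin n → Bool)) : Set (Fin n → ℝ) :=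
  cube (dyadicCorner a l w) (l / 2 ^ w.length)

noncomputable def dyadicChain : (Fin n → ℝ) → ℝ → (Fin n → ℝ) → ℕ → List (Fin n → Bool)
  | _, _, _, 0 => []
  | a, l, x, k + 1 =>
    childIndex a l x :: dyadicChain (childCorner a l (childIndex a l x)) (l / 2) x k

section Dyadic

variable {a x : Fin n → ℝ} {l : ℝ}

@[simp] lemma dyadicCube_nil : dyadicCube a l [] = cube a l := by
  simp [dyadicCube, dyadicCorner]

lemma dyadicCube_cons (v : Fin n → Bool) (w : List (Fin n → Bool)) :
    dyadicCube a l (v :: w) = dyadicCube (childCorner a l v) (l / 2) w := by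
  simp only [dyadicCube, dyadicCorner, List.length_cons, pow_succ', div_div]

lemma dyadicCube_subset (hl : 0 ≤ l) (w : List (Fin n → Bool)) : dyadicCube a l w ⊆ cube a l := by
  induction w generalizing a l with
  | nil => simp
  | cons v w ih =>
    rw [dyadicCube_cons]
    exact (ih (by linarith)).trans (cube_childCorner_subset hl v)

lemma dyadicCube_append_subset (hl : 0 ≤ l) (w u : List (Fin n → Bool)) :
    dyadicCube a l (w ++ u) ⊆ dyadicCube a l w := by
  induction w generalizing a l with
  | nil => simpa using dyadicCube_subset hl u
  | cons v w ih =>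
    simp only [List.cons_append, dyadicCube_cons]
    exact ih (by linarith)

lemma volume_dyadicCube (w : List (Fin n → Bool)) :
    volume (dyadicCube a l w) = ENNReal.ofReal (l / 2 ^ w.length) ^ n :=
  volume_cube _ _

lemma volume_dyadicCube_eq_two_pow_mul (w : List (Fin n → Bool))
    (v : Fin n → Bool) :
    volume (dyadicCube a l w) = 2 ^ n * volume (dyadicCube a l (w ++ [v])) := by
  rw [volume_dyadicCube, volume_dyadicCube, ← ENNReal.ofReal_ofNat, ← mul_pow,
    ← ENNReal.ofReal_mul zero_le_two, List.length_append, List.length_singleton, pow_succ]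
  congr 2
  field_simp

lemma volume_dyadicCube_inter (hl : 0 ≤ l) {w₁ w₂ : List (Fin n → Bool)} (h₁ : ¬ w₁ <+: w₂)
    (h₂ : ¬ w₂ <+: w₁) : volume (dyadicCube a l w₁ ∩ dyadicCube a l w₂) = 0 := by
  induction w₁ generalizing a l w₂ with
  | nil => exact absurd List.nil_prefix h₁
  | cons v₁ w₁ ih =>
    cases w₂ with
    | nil => exact absurd List.nil_prefix h₂
    | cons v₂ w₂ =>
      rw [dyadicCube_cons, dyadicCube_cons]
      by_cases hv : v₁ = v₂
      · subst hv
        simp only [List.cons_prefix_cons, true_and] at h₁ h₂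
        exact ih (by linarith) h₁ h₂
      · exact measure_mono_null (inter_subset_inter (dyadicCube_subset (by linarith) _)
          (dyadicCube_subset (by linarith) _)) (volume_cube_childCorner_inter hv)

@[simp] lemma length_dyadicChain (k : ℕ) : (dyadicChain a l x k).length = k := by
  induction k generalizing a l with
  | zero => rfl
  | succ k ih => simp [dyadicChain, ih]

lemma eq_dyadicChain_of_prefix {u : List (Fin n → Bool)} {k : ℕ}
    (h : u <+: dyadicChain a l x k) : u = dyadicChain a l x u.length := by
  induction k generalizing a l u with
  | zero => obtain rfl := List.prefix_nil.1 h; rfl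
  | succ k ih =>
    cases u with
    | nil => rfl
    | cons v u =>
      obtain ⟨rfl, hu⟩ := List.cons_prefix_cons.1 h
      simp only [dyadicChain, List.length_cons]
      exact congrArg _ (ih hu)

lemma mem_dyadicCube_dyadicChain (hx : x ∈ cube a l) (k : ℕ) :
    x ∈ dyadicCube a l (dyadicChain a l x k) := by
  induction k generalizing a l with
  | zero => simpa [dyadicChain] using hx
  | succ k ih =>
    rw [dyadicChain, dyadicCube_cons]
    exact ih (mem_cube_childCorner_childIndex hx)

end Dyadic

section Averages

variable {α : Type*} [MeasurableSpace α] {μ : Measure α} {s t : Set α} {g : α → ℝ}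

lemma abs_setAverage_sub_le (hμ₀ : μ s ≠ 0) (hμ : μ s ≠ ∞) (hg : IntegrableOn g s μ) (c : ℝ) :
    |(⨍ x in s, g x ∂μ) - c| ≤ ⨍ x in s, |g x - c| ∂μ := by
  have hreal : μ.real s ≠ 0 := (ENNReal.toReal_pos hμ₀ hμ).ne'
  have hsub : (⨍ x in s, g x ∂μ) - c = ⨍ x in s, (g x - c) ∂μ := by
    rw [setAverage_eq, setAverage_eq, integral_sub hg (integrableOn_const hμ), setIntegral_const,
      smul_sub, inv_smul_smul₀ hreal]
  rw [hsub, setAverage_eq, setAverage_eq, smul_eq_mul, smul_eq_mul, abs_mul,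
    abs_of_nonneg (inv_nonneg.2 measureReal_nonneg)]
  exact mul_le_mul_of_nonneg_left (abs_integral_le_integral_abs) (inv_nonneg.2 measureReal_nonneg)

lemma setAverage_le_mul_setAverage (hst : s ⊆ t) (hg : 0 ≤ g) (hgt : IntegrableOn g t μ)
    (hμt : μ t ≠ ∞) {r : ℝ} (hr : μ.real t ≤ r * μ.real s) :
    ⨍ x in s, g x ∂μ ≤ r * ⨍ x in t, g x ∂μ := by
  have havg_t : 0 ≤ ⨍ x in t, g x ∂μ := by
    rw [setAverage_eq, smul_eq_mul]
    exact mul_nonneg (inv_nonneg.2 measureReal_nonneg) (integral_nonneg hg)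
  rcases eq_or_lt_of_le (measureReal_nonneg (μ := μ) (s := s)) with hs | hs
  · have ht : μ.real t = 0 := le_antisymm (by simpa [← hs] using hr) measureReal_nonneg
    simp [setAverage_eq, ← hs, ht]
  calc ⨍ x in s, g x ∂μ = (μ.real s)⁻¹ * ∫ x in s, g x ∂μ := by rw [setAverage_eq, smul_eq_mul]
    _ ≤ (μ.real s)⁻¹ * ∫ x in t, g x ∂μ :=
      mul_le_mul_of_nonneg_left (setIntegral_mono_set hgt (ae_of_all _ hg) hst.eventuallyLE)
        (inv_nonneg.2 measureReal_nonneg)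
    _ = (μ.real s)⁻¹ * μ.real t * ⨍ x in t, g x ∂μ := by
      rw [mul_assoc, ← smul_eq_mul (a := μ.real t), measure_smul_setAverage g hμt]
    _ ≤ (μ.real s)⁻¹ * (r * μ.real s) * ⨍ x in t, g x ∂μ := by gcongr
    _ = r * ⨍ x in t, g x ∂μ := by field_simp

end Averages

noncomputable def stoppingCubes (g : (Fin n → ℝ) → ℝ) (a : Fin n → ℝ) (l t : ℝ) :
    Set (List (Fin n → Bool)) :=
  {w | t < ⨍ y in dyadicCube a l w, g y ∧
    ∀ u, u <+: w → u ≠ w → ⨍ y in dyadicCube a l u, g y ≤ t}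

section StoppingCubes

variable {g : (Fin n → ℝ) → ℝ} {a : Fin n → ℝ} {l t : ℝ}

lemma integrableOn_dyadicCube (hg : LocallyIntegrable g volume) (w : List (Fin n → Bool)) :
    IntegrableOn g (dyadicCube a l w) volume :=
  hg.integrableOn_isCompact isCompact_Icc

lemma not_prefix_of_mem_stoppingCubes {w₁ w₂ : List (Fin n → Bool)}
    (h₁ : w₁ ∈ stoppingCubes g a l t) (h₂ : w₂ ∈ stoppingCubes g a l t) (hne : w₁ ≠ w₂) :
    ¬ w₁ <+: w₂ :=
  fun hp => h₁.1.not_ge (h₂.2 w₁ hp hne)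

lemma pairwise_aedisjoint_stoppingCubes (hl : 0 ≤ l) :
    Pairwise (Function.onFun (AEDisjoint volume)
      fun w : stoppingCubes g a l t => dyadicCube a l w) :=
  fun w₁ w₂ hne => volume_dyadicCube_inter hl
    (not_prefix_of_mem_stoppingCubes w₁.2 w₂.2 (Subtype.coe_injective.ne hne))
    (not_prefix_of_mem_stoppingCubes w₂.2 w₁.2 (Subtype.coe_injective.ne hne.symm))

/-- The parent of a stopping cube is not stopped and has `2ⁿ` times its volume. -/
lemma setAverage_le_of_mem_stoppingCubes (hg : LocallyIntegrable g volume) (hg₀ : 0 ≤ g)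
    (hl : 0 < l) (hroot : ⨍ y in cube a l, g y ≤ t) {w : List (Fin n → Bool)}
    (hw : w ∈ stoppingCubes g a l t) : ⨍ y in dyadicCube a l w, g y ≤ 2 ^ n * t := by
  obtain rfl | ⟨u, v, rfl⟩ := List.eq_nil_or_concat' w
  · exact absurd hroot (by simpa using hw.1)
  have hu : ⨍ y in dyadicCube a l u, g y ≤ t := hw.2 u (List.prefix_append _ _) (by simp)
  calc ⨍ y in dyadicCube a l (u ++ [v]), g y ≤ 2 ^ n * ⨍ y in dyadicCube a l u, g y := by
        refine setAverage_le_mul_setAverage (dyadicCube_append_subset hl.le u [v]) hg₀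
          (integrableOn_dyadicCube hg u) (volume_cube_ne_top _ _) ?_
        rw [measureReal_def, measureReal_def, volume_dyadicCube_eq_two_pow_mul u v,
          ENNReal.toReal_mul]
        simp
    _ ≤ 2 ^ n * t := by gcongr

lemma ofReal_mul_tsum_volume_stoppingCubes_le (hg : LocallyIntegrable g volume) (hg₀ : 0 ≤ g)
    (hl : 0 < l) :
    ENNReal.ofReal t * ∑' w : stoppingCubes g a l t, volume (dyadicCube a l w) ≤
      ∫⁻ y in cube a l, ENNReal.ofReal (g y) := by
  have hcube : ∀ w ∈ stoppingCubes g a l t,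
      ENNReal.ofReal t * volume (dyadicCube a l w) ≤
        ∫⁻ y in dyadicCube a l w, ENNReal.ofReal (g y) := by
    intro w hw
    have hw₀ : volume (dyadicCube a l w) ≠ 0 := volume_cube_ne_zero _ (by positivity)
    have hw_top : volume (dyadicCube a l w) ≠ ∞ := volume_cube_ne_top _ _
    rw [← ENNReal.le_div_iff_mul_le (Or.inl hw₀) (Or.inl hw_top),
      ← ofReal_setAverage (integrableOn_dyadicCube hg w) (ae_of_all _ hg₀)]
    exact ENNReal.ofReal_le_ofReal hw.1.le
  calc ENNReal.ofReal t * ∑' w : stoppingCubes g a l t, volume (dyadicCube a l w)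
      = ∑' w : stoppingCubes g a l t, ENNReal.ofReal t * volume (dyadicCube a l w) :=
        ENNReal.tsum_mul_left.symm
    _ ≤ ∑' w : stoppingCubes g a l t, ∫⁻ y in dyadicCube a l w, ENNReal.ofReal (g y) :=
        ENNReal.tsum_le_tsum fun w => hcube w w.2
    _ = ∫⁻ y in ⋃ w : stoppingCubes g a l t, dyadicCube a l w, ENNReal.ofReal (g y) :=
        (lintegral_iUnion₀ (fun _ => (measurableSet_cube _ _).nullMeasurableSet)
          (pairwise_aedisjoint_stoppingCubes hl.le) _).symm
    _ ≤ ∫⁻ y in cube a l, ENNReal.ofReal (g y) :=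
        lintegral_mono_set (iUnion_subset fun w => dyadicCube_subset (a := a) hl.le w.1)

lemma tsum_volume_stoppingCubes_le (hg : LocallyIntegrable g volume) (hg₀ : 0 ≤ g) (hl : 0 < l)
    (hroot : ⨍ y in cube a l, g y ≤ 1) :
    ∑' w : stoppingCubes g a l 2, volume (dyadicCube a l w) ≤ 2⁻¹ * volume (cube a l) := by
  have hint : ∫⁻ y in cube a l, ENNReal.ofReal (g y) ≤ volume (cube a l) := by
    have h := (ENNReal.div_le_iff (volume_cube_ne_zero a hl) (volume_cube_ne_top a l)).1
      ((ofReal_setAverage (hg.integrableOn_isCompact isCompact_Icc) (ae_of_all _ hg₀)).symm.trans_le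
        (ENNReal.ofReal_le_one.2 hroot))
    rwa [one_mul] at h
  have h₂ := (ofReal_mul_tsum_volume_stoppingCubes_le (t := 2) hg hg₀ hl).trans hint
  rw [ENNReal.ofReal_ofNat] at h₂
  calc ∑' w : stoppingCubes g a l 2, volume (dyadicCube a l w)
      = 2⁻¹ * (2 * ∑' w : stoppingCubes g a l 2, volume (dyadicCube a l w)) := by
        rw [← mul_assoc, ENNReal.inv_mul_cancel two_ne_zero ENNReal.ofNat_ne_top, one_mul]
    _ ≤ 2⁻¹ * volume (cube a l) := by gcongr

lemma ae_tendsto_setAverage_dyadicChain (hg : LocallyIntegrable g volume) (hl : 0 < l) :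
    ∀ᵐ x, x ∈ cube a l →
      Tendsto (fun k => ⨍ y in dyadicCube a l (dyadicChain a l x k), g y) atTop (𝓝 (g x)) := by
  filter_upwards [IsUnifLocDoublingMeasure.ae_tendsto_average (μ := volume) hg 1] with x hx hxQ
  set δ : ℕ → ℝ := fun k => l / 2 ^ k / 2
  have hball : ∀ k, dyadicCube a l (dyadicChain a l x k) =
      closedBall (fun i => dyadicCorner a l (dyadicChain a l x k) i + δ k) (δ k) := fun k => by
    rw [dyadicCube, cube_eq_closedBall _ (by positivity), length_dyadicChain]
  have hδ : Tendsto δ atTop (𝓝[>] 0) := by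
    refine tendsto_nhdsWithin_iff.2 ⟨?_, Eventually.of_forall fun k => ?_⟩
    · have : Tendsto (fun k : ℕ => l / 2 ^ k) atTop (𝓝 0) :=
        tendsto_const_nhds.div_atTop (tendsto_pow_atTop_atTop_of_one_lt one_lt_two)
      simpa using this.div_const 2
    · exact mem_Ioi.2 (by positivity)
  simp_rw [hball]
  refine hx _ δ hδ (Eventually.of_forall fun k => ?_)
  rw [one_mul, ← hball]
  exact mem_dyadicCube_dyadicChain hxQ k

lemma ae_le_of_forall_notMem_stoppingCubes (hg : LocallyIntegrable g volume) (hl : 0 < l) :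
    ∀ᵐ x, x ∈ cube a l → (∀ w ∈ stoppingCubes g a l t, x ∉ dyadicCube a l w) → g x ≤ t := by
  classical
  filter_upwards [ae_tendsto_setAverage_dyadicChain (a := a) hg hl] with x hx hxQ hxS
  refine le_of_tendsto (hx hxQ) (Eventually.of_forall fun k => ?_)
  by_contra! hk
  -- otherwise the first cube of the chain through `x` with average above `t` is a stopping cube
  have hex : ∃ k, t < ⨍ y in dyadicCube a l (dyadicChain a l x k), g y := ⟨k, hk⟩
  refine hxS _ ⟨Nat.find_spec hex, fun u hu hne => ?_⟩ (mem_dyadicCube_dyadicChain hxQ _)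
  have hlen : u.length < Nat.find hex := by
    refine lt_of_le_of_ne (by simpa using hu.length_le) fun h => hne ?_
    rw [eq_dyadicChain_of_prefix hu, h]
  rw [eq_dyadicChain_of_prefix hu]
  exact not_lt.1 (Nat.find_min hex hlen)

end StoppingCubes

lemma ofReal_le_tsum_ite {M : ℝ} (hM : 0 < M) (s : ℝ) :
    ENNReal.ofReal s ≤ ∑' j : ℕ, if M * j < s then ENNReal.ofReal M else 0 := by
  rcases le_or_gt s 0 with hs | hs
  · simp [ENNReal.ofReal_of_nonpos hs]
  calc ENNReal.ofReal s = ENNReal.ofReal (s / M) * ENNReal.ofReal M := by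
        rw [← ENNReal.ofReal_mul (by positivity), div_mul_cancel₀ s hM.ne']
    _ ≤ (⌈s / M⌉₊ : ℝ≥0∞) * ENNReal.ofReal M := by
        gcongr
        rw [← ENNReal.ofReal_natCast]
        exact ENNReal.ofReal_le_ofReal (Nat.le_ceil _)
    _ = ∑ j ∈ Finset.range ⌈s / M⌉₊, if M * j < s then ENNReal.ofReal M else 0 := by
        rw [Finset.sum_congr rfl fun j hj => if_pos ?_, Finset.sum_const, Finset.card_range,
          nsmul_eq_mul]
        rw [Finset.mem_range, Nat.lt_ceil, lt_div_iff₀ hM] at hj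
        linarith
    _ ≤ _ := ENNReal.sum_le_tsum _

lemma lintegral_ofReal_le_tsum_measure {α : Type*} [MeasurableSpace α] {μ : Measure α}
    {h : α → ℝ} (hh : AEMeasurable h μ) {M : ℝ} (hM : 0 < M) :
    ∫⁻ x, ENNReal.ofReal (h x) ∂μ ≤ ∑' j : ℕ, ENNReal.ofReal M * μ {x | M * j < h x} := by
  have hmeas (j : ℕ) : NullMeasurableSet {x | M * j < h x} μ :=
    nullMeasurableSet_lt aemeasurable_const hh
  calc ∫⁻ x, ENNReal.ofReal (h x) ∂μ
      ≤ ∫⁻ x, ∑' j : ℕ, {x | M * j < h x}.indicator (fun _ => ENNReal.ofReal M) x ∂μ :=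
        lintegral_mono fun x => by
          simpa [indicator_apply] using ofReal_le_tsum_ite hM (h x)
    _ = ∑' j : ℕ, ∫⁻ x, {x | M * j < h x}.indicator (fun _ => ENNReal.ofReal M) x ∂μ :=
        lintegral_tsum fun j => aemeasurable_const.indicator₀ (hmeas j)
    _ = ∑' j : ℕ, ENNReal.ofReal M * μ {x | M * j < h x} := by
        simp_rw [lintegral_indicator_const₀ (hmeas _)]

lemma tsum_min_two_inv_pow_mul_le {a b : ℝ≥0∞} {K : ℕ} (hK : 2⁻¹ ^ K * b ≤ a) :
    ∑' j : ℕ, min a (2⁻¹ ^ j * b) ≤ (K + 2) * a := by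
  rw [← ENNReal.summable.sum_add_tsum_nat_add' (k := K + 1)]
  have hhead : ∑ j ∈ Finset.range (K + 1), min a (2⁻¹ ^ j * b) ≤ (K + 1) * a := by
    calc ∑ j ∈ Finset.range (K + 1), min a (2⁻¹ ^ j * b) ≤ ∑ j ∈ Finset.range (K + 1), a :=
          Finset.sum_le_sum fun j _ => min_le_left _ _
      _ = (K + 1) * a := by simp
  have htail : ∑' j : ℕ, min a (2⁻¹ ^ (j + (K + 1)) * b) ≤ a := by
    calc ∑' j : ℕ, min a (2⁻¹ ^ (j + (K + 1)) * b)
        ≤ ∑' j : ℕ, 2⁻¹ ^ j * (2⁻¹ ^ (K + 1) * b) :=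
          ENNReal.tsum_le_tsum fun j => (min_le_right _ _).trans_eq (by rw [pow_add, mul_assoc])
      _ = 2 * 2⁻¹ * (2⁻¹ ^ K * b) := by
          rw [ENNReal.tsum_mul_right, ENNReal.tsum_geometric, ENNReal.one_sub_inv_two, inv_inv,
            pow_succ]
          ring
      _ ≤ a := by rw [ENNReal.mul_inv_cancel two_ne_zero ENNReal.ofNat_ne_top, one_mul]; exact hK
  calc _ ≤ (K + 1) * a + a := add_le_add hhead htail
    _ = (K + 2) * a := by ring

lemma exists_two_inv_pow_mul_le {x y : ℝ≥0∞} (hy : y ≠ 0) (hx : x ≠ ∞) (hyx : y ≤ x) :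
    ∃ K : ℕ, 2⁻¹ ^ K * x ≤ y ∧ (K + 2 : ℝ) ≤ 3 * (1 + Real.log (x.toReal / y.toReal)) := by
  have hy' : y ≠ ∞ := ne_top_of_le_ne_top hx hyx
  have hy₀ : 0 < y.toReal := ENNReal.toReal_pos hy hy'
  set r := x.toReal / y.toReal
  have hr : 1 ≤ r := (one_le_div hy₀).2 (ENNReal.toReal_mono hx hyx)
  set K := ⌈Real.logb 2 r⌉₊
  refine ⟨K, ?_, ?_⟩
  · have hr_le : x.toReal ≤ 2 ^ K * y.toReal := by
      rw [← div_le_iff₀ hy₀]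
      calc r = 2 ^ Real.logb 2 r := (Real.rpow_logb two_pos one_lt_two.ne' (by linarith)).symm
        _ ≤ 2 ^ (K : ℝ) := Real.rpow_le_rpow_of_exponent_le one_le_two (Nat.le_ceil _)
        _ = 2 ^ K := Real.rpow_natCast _ _
    have hx_le : x ≤ 2 ^ K * y := by
      rw [← ENNReal.ofReal_toReal hx, ← ENNReal.ofReal_toReal hy']
      calc ENNReal.ofReal x.toReal ≤ ENNReal.ofReal (2 ^ K * y.toReal) :=
            ENNReal.ofReal_le_ofReal hr_le
        _ = 2 ^ K * ENNReal.ofReal y.toReal := by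
            rw [ENNReal.ofReal_mul (by positivity), ENNReal.ofReal_pow zero_le_two,
              ENNReal.ofReal_ofNat]
    calc 2⁻¹ ^ K * x ≤ 2⁻¹ ^ K * (2 ^ K * y) := by gcongr
      _ = y := by
          rw [← mul_assoc, ← mul_pow, ENNReal.inv_mul_cancel two_ne_zero ENNReal.ofNat_ne_top,
            one_pow, one_mul]
  · have hK_lt := Nat.ceil_lt_add_one (Real.logb_nonneg one_lt_two hr)
    have hlog : 0 ≤ Real.log r := Real.log_nonneg hr
    have hlogb : Real.logb 2 r ≤ 2 * Real.log r := by
      rw [Real.logb, div_le_iff₀ (Real.log_pos one_lt_two)]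
      nlinarith [Real.log_two_gt_d9]
    linarith

lemma MeasureTheory.LocallyIntegrable.abs_sub_const {X : Type*} [TopologicalSpace X]
    [MeasurableSpace X] {μ : Measure X} [IsLocallyFiniteMeasure μ] {f : X → ℝ}
    (hf : LocallyIntegrable f μ) (c : ℝ) :
    LocallyIntegrable (fun x => |f x - c|) μ :=
  locallyIntegrableOn_univ.1 (((hf.sub (locallyIntegrable_const c)).locallyIntegrableOn univ).norm)

section JohnNirenberg

variable {f : (Fin n → ℝ) → ℝ} {a : Fin n → ℝ} {l c : ℝ}

lemma oscN_cube_le_one_of_bmoN_le_one (h : bmoN f ≤ 1) (hl : 0 < l) :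
    oscN f (cube a l) ≤ 1 := by
  refine ENNReal.ofReal_le_one.1 (le_trans ?_ h)
  exact le_iSup_of_le a <| le_iSup_of_le l <| le_iSup_of_le hl le_rfl

lemma abs_setAverage_sub_le_of_mem_stoppingCubes (hf : LocallyIntegrable f volume) (hl : 0 < l)
    (hroot : ⨍ y in cube a l, |f y - c| ≤ 1) {w : List (Fin n → Bool)}
    (hw : w ∈ stoppingCubes (fun x => |f x - c|) a l 2) :
    |(⨍ y in dyadicCube a l w, f y) - c| ≤ 2 ^ (n + 1) :=
  calc |(⨍ y in dyadicCube a l w, f y) - c| ≤ ⨍ y in dyadicCube a l w, |f y - c| :=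
        abs_setAverage_sub_le (volume_cube_ne_zero _ (by positivity)) (volume_cube_ne_top _ _)
          (integrableOn_dyadicCube hf w) c
    _ ≤ 2 ^ n * 2 := setAverage_le_of_mem_stoppingCubes (hf.abs_sub_const c)
        (fun _ => abs_nonneg _) hl (hroot.trans one_le_two) hw
    _ = 2 ^ (n + 1) := by ring

lemma setOf_lt_abs_sub_subset (hf : LocallyIntegrable f volume) (hl : 0 < l)
    (hroot : ⨍ y in cube a l, |f y - c| ≤ 1) (k : ℕ) :
    {x ∈ cube a l | 2 ^ (n + 1) * (k + 1) < |f x - c|} ⊆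
      {x ∈ cube a l | (∀ w ∈ stoppingCubes (fun x => |f x - c|) a l 2, x ∉ dyadicCube a l w) ∧
          2 < |f x - c|} ∪
        ⋃ w : stoppingCubes (fun x => |f x - c|) a l 2,
          {x ∈ dyadicCube a l w | 2 ^ (n + 1) * k < |f x - ⨍ y in dyadicCube a l w, f y|} := by
  rintro x ⟨hxQ, hx⟩
  by_cases hxS : ∀ w ∈ stoppingCubes (fun x => |f x - c|) a l 2, x ∉ dyadicCube a l w
  · refine Or.inl ⟨hxQ, hxS, ?_⟩
    have h₂ : (2 : ℝ) ≤ 2 ^ (n + 1) := le_self_pow₀ one_le_two n.succ_ne_zero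
    have hk : (0 : ℝ) ≤ 2 ^ (n + 1) * k := by positivity
    linarith
  · obtain ⟨w, hw, hxw⟩ : ∃ w ∈ stoppingCubes (fun x => |f x - c|) a l 2, x ∈ dyadicCube a l w := by
      simpa using hxS
    refine Or.inr (mem_iUnion.2 ⟨⟨w, hw⟩, hxw, ?_⟩)
    linarith [abs_sub_le (f x) (⨍ y in dyadicCube a l w, f y) c,
      abs_setAverage_sub_le_of_mem_stoppingCubes hf hl hroot hw]

theorem volume_lt_abs_sub_setAverage_le (hf : LocallyIntegrable f volume)
    (hb : ∀ (b : Fin n → ℝ) (m : ℝ), 0 < m → oscN f (cube b m) ≤ 1) (k : ℕ) (hl : 0 < l) :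
    volume {x ∈ cube a l | 2 ^ (n + 1) * k < |f x - ⨍ y in cube a l, f y|} ≤
      2⁻¹ ^ k * volume (cube a l) := by
  induction k generalizing a l with
  | zero => simpa using measure_mono (sep_subset _ _)
  | succ k ih =>
    set c := ⨍ y in cube a l, f y
    set S := stoppingCubes (fun x => |f x - c|) a l 2
    have hroot : ⨍ y in cube a l, |f y - c| ≤ 1 := hb a l hl
    have hgood : volume {x ∈ cube a l | (∀ w ∈ S, x ∉ dyadicCube a l w) ∧ 2 < |f x - c|} = 0 := by
      refine measure_mono_null ?_
        (ae_iff.1 (ae_le_of_forall_notMem_stoppingCubes (a := a) (t := 2) (hf.abs_sub_const c) hl))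
      rintro x ⟨hxQ, hxS, hx⟩ h
      exact not_lt.2 (h hxQ hxS) hx
    push_cast
    calc volume {x ∈ cube a l | 2 ^ (n + 1) * (k + 1) < |f x - c|}
        ≤ volume {x ∈ cube a l | (∀ w ∈ S, x ∉ dyadicCube a l w) ∧ 2 < |f x - c|} +
          volume (⋃ w : S, {x ∈ dyadicCube a l w |
            2 ^ (n + 1) * k < |f x - ⨍ y in dyadicCube a l w, f y|}) :=
          (measure_mono (setOf_lt_abs_sub_subset hf hl hroot k)).trans (measure_union_le _ _)
      _ ≤ ∑' w : S, 2⁻¹ ^ k * volume (dyadicCube a l w) := by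
          rw [hgood, zero_add]
          exact (measure_iUnion_le _).trans (ENNReal.tsum_le_tsum fun w => ih (by positivity))
      _ = 2⁻¹ ^ k * ∑' w : S, volume (dyadicCube a l w) := ENNReal.tsum_mul_left
      _ ≤ 2⁻¹ ^ k * (2⁻¹ * volume (cube a l)) := by
          gcongr
          exact tsum_volume_stoppingCubes_le (hf.abs_sub_const c) (fun _ => abs_nonneg _) hl hroot
      _ = 2⁻¹ ^ (k + 1) * volume (cube a l) := by rw [pow_succ, mul_assoc]

theorem setAverage_abs_sub_setAverage_le (hf : LocallyIntegrable f volume)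
    (hb : ∀ (b : Fin n → ℝ) (m : ℝ), 0 < m → oscN f (cube b m) ≤ 1) (hl : 0 < l)
    {A : Set (Fin n → ℝ)} (hA : A ⊆ cube a l) {K : ℕ} (hK : 2⁻¹ ^ K * volume (cube a l) ≤ volume A) :
    ⨍ x in A, |f x - ⨍ y in cube a l, f y| ≤ 2 ^ (n + 1) * (K + 2) := by
  set c := ⨍ y in cube a l, f y
  have hint : IntegrableOn (fun x => |f x - c|) A volume :=
    IntegrableOn.mono_set ((hf.integrableOn_isCompact isCompact_Icc).sub
      (integrableOn_const (volume_cube_ne_top a l))).abs hA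
  have hlevel (j : ℕ) : volume.restrict A {x | 2 ^ (n + 1) * j < |f x - c|} ≤
      min (volume A) (2⁻¹ ^ j * volume (cube a l)) := by
    refine le_min ((measure_mono (subset_univ _)).trans_eq (Measure.restrict_apply_univ A)) ?_
    calc volume.restrict A {x | 2 ^ (n + 1) * j < |f x - c|}
        ≤ volume.restrict (cube a l) {x | 2 ^ (n + 1) * j < |f x - c|} :=
          Measure.restrict_mono hA le_rfl _
      _ = volume {x ∈ cube a l | 2 ^ (n + 1) * j < |f x - c|} := by
          rw [Measure.restrict_apply' (measurableSet_cube a l), inter_comm]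
          rfl
      _ ≤ 2⁻¹ ^ j * volume (cube a l) := volume_lt_abs_sub_setAverage_le hf hb j hl
  have hlint : ∫⁻ x in A, ENNReal.ofReal |f x - c| ≤
      ENNReal.ofReal (2 ^ (n + 1) * (K + 2)) * volume A :=
    calc ∫⁻ x in A, ENNReal.ofReal |f x - c|
        ≤ ∑' j : ℕ, ENNReal.ofReal (2 ^ (n + 1)) *
            volume.restrict A {x | 2 ^ (n + 1) * j < |f x - c|} :=
          lintegral_ofReal_le_tsum_measure hint.aemeasurable (by positivity)
      _ ≤ ∑' j : ℕ, ENNReal.ofReal (2 ^ (n + 1)) * min (volume A) (2⁻¹ ^ j * volume (cube a l)) :=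
          ENNReal.tsum_le_tsum fun j => by gcongr; exact hlevel j
      _ = ENNReal.ofReal (2 ^ (n + 1)) * ∑' j : ℕ, min (volume A) (2⁻¹ ^ j * volume (cube a l)) :=
          ENNReal.tsum_mul_left
      _ ≤ ENNReal.ofReal (2 ^ (n + 1)) * ((K + 2) * volume A) := by
          gcongr
          exact tsum_min_two_inv_pow_mul_le hK
      _ = ENNReal.ofReal (2 ^ (n + 1) * (K + 2)) * volume A := by
          rw [ENNReal.ofReal_mul (by positivity), mul_assoc]
          norm_cast
  rw [← ENNReal.ofReal_le_ofReal_iff (by positivity),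
    ofReal_setAverage hint (ae_of_all _ fun _ => abs_nonneg _)]
  exact ENNReal.div_le_of_le_mul hlint

end JohnNirenberg

theorem mean_oscillation_on_subset_general (n : ℕ) :
    ∃ C : ℝ, 0 < C ∧
      ∀ (f : (Fin n → ℝ) → ℝ), LocallyIntegrable f volume → bmoN f ≤ 1 →
      ∀ (a : Fin n → ℝ) (l : ℝ), 0 < l →
      ∀ A : Set (Fin n → ℝ), MeasurableSet A → A ⊆ cube a l → 0 < volume A →
        (⨍ x in A, |f x - ⨍ y in cube a l, f y|) ≤
          C * (1 + Real.log ((volume (cube a l)).toReal / (volume A).toReal)) := by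
  refine ⟨3 * 2 ^ (n + 1), by positivity, fun f hf hbmo a l hl A _ hA hA₀ => ?_⟩
  obtain ⟨K, hK, hK_log⟩ :=
    exists_two_inv_pow_mul_le hA₀.ne' (volume_cube_ne_top a l) (measure_mono hA)
  calc ⨍ x in A, |f x - ⨍ y in cube a l, f y|
      ≤ 2 ^ (n + 1) * (K + 2) :=
        setAverage_abs_sub_setAverage_le hf
          (fun _ _ hm => oscN_cube_le_one_of_bmoN_le_one hbmo hm) hl hA hK
    _ ≤ 2 ^ (n + 1) * (3 * (1 + Real.log ((volume (cube a l)).toReal / (volume A).toReal))) := by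
        gcongr
    _ = _ := by ring

/-- there is a dimensional constant `C(n)` such that for any cube `Q`,
any measurable `A ⊆ Q` of positive measure, and any locally integrable `f` with
`‖f‖_{BMO(ℝⁿ)} ≤ 1`, one has `(1/|A|) ∫_A |f − f_Q| ≤ C(n)(1 + log(|Q|/|A|))`. -/
theorem mean_oscillation_on_subset (n : ℕ) (hn : 1 ≤ n) :
    ∃ C : ℝ, 0 < C ∧
      ∀ (f : (Fin n → ℝ) → ℝ), LocallyIntegrable f volume → bmoN f ≤ 1 →
      ∀ (a : Fin n → ℝ) (l : ℝ), 0 < l →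
      ∀ A : Set (Fin n → ℝ), MeasurableSet A → A ⊆ cube a l → 0 < volume A →
        (⨍ x in A, |f x - ⨍ y in cube a l, f y|) ≤
          C * (1 + Real.log ((volume (cube a l)).toReal / (volume A).toReal)) :=
  mean_oscillation_on_subset_general n
end

section
/- There exist absolute constants 0 < C₁ ≤ C₂ such that for all measurable sets A, B ⊂ ℝ with 0 < |A| < ∞ and 0 < |B| < ∞ and every measurable f : ℝ² → ℝ that is integrable on A × B, one has C₁ (S₁ + S₂) ≤ O(f, A×B) ≤ C₂ (S₁ + S₂), where S₁ = (1/|B|) ∫_B O(f(·,y), A) dy and S₂ = (1/|A|) ∫_A O(f(x,·), B) dx. -/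
open MeasureTheory Set Filter
open scoped ENNReal Topology

/-- Mean oscillation of `f : ℝ × ℝ → ℝ` over `E ⊆ ℝ²`. -/
noncomputable def osc2 (f : ℝ × ℝ → ℝ) (E : Set (ℝ × ℝ)) : ℝ :=
  ⨍ p in E, |f p - ⨍ q in E, f q|

/-!
Normalise `A`, `B` to probability measures `μ`, `ν`, so that `A × B` becomes `μ ⊗ ν` and averages
become integrals. Write `m y = ∫ f(·, y) dμ` and `n x = ∫ f(x, ·) dν`, so that `∫ n dμ` is the
mean `M` of `f`. The lower bound is the slice-wise estimate `O(g) ≤ 2 ∫ |g - c|` with `c = M`,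
integrated by Fubini. For the upper bound,
`|f(x, y) - M| ≤ |f(x, y) - m y| + ∫ |f(·, y) - n| dμ`, and by Fubini the integral of the last
term is the average oscillation of the vertical slices.
-/

namespace ProbabilityTheory

theorem setAverage_eq_integral_cond {α E : Type*} [MeasurableSpace α] [NormedAddCommGroup E]
    [NormedSpace ℝ E] (μ : Measure α) (f : α → E) (s : Set α) :
    ⨍ x in s, f x ∂μ = ∫ x, f x ∂μ[|s] :=
  setAverage_eq' μ f s

theorem cond_prod {α β : Type*} [MeasurableSpace α] [MeasurableSpace β] {μ : Measure α}
    {ν : Measure β} [SFinite μ] [SFinite ν] {s : Set α} {t : Set β} (hs : μ s ≠ ∞)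
    (ht : ν t ≠ ∞) : (μ.prod ν)[|s ×ˢ t] = μ[|s].prod ν[|t] := by
  rw [cond, cond, cond, Measure.prod_smul_left, Measure.prod_smul_right, smul_smul,
    Measure.prod_restrict, Measure.prod_prod, ENNReal.mul_inv (Or.inr ht) (Or.inl hs)]

end ProbabilityTheory

open ProbabilityTheory

section MeanOscillation

variable {α β : Type*} [MeasurableSpace α] [MeasurableSpace β]

-- Agrees with the mean oscillation of `g` when `μ` is a probability measure.
noncomputable def meanOsc (μ : Measure α) (g : α → ℝ) : ℝ :=
  ∫ x, |g x - ∫ y, g y ∂μ| ∂μ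

theorem meanOsc_nonneg (μ : Measure α) (g : α → ℝ) : 0 ≤ meanOsc μ g :=
  integral_nonneg fun _ => abs_nonneg _

theorem osc1_eq_meanOsc (g : ℝ → ℝ) (A : Set ℝ) : osc1 g A = meanOsc volume[|A] g := by
  simp only [osc1, meanOsc, setAverage_eq_integral_cond]

theorem osc2_eq_meanOsc (f : ℝ × ℝ → ℝ) (E : Set (ℝ × ℝ)) :
    osc2 f E = meanOsc volume[|E] f := by
  simp only [osc2, meanOsc, setAverage_eq_integral_cond]

theorem meanOsc_prod_swap {μ : Measure α} {ν : Measure β} [SFinite μ] [SFinite ν]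
    (f : α × β → ℝ) : meanOsc (ν.prod μ) (fun p => f p.swap) = meanOsc (μ.prod ν) f := by
  simp only [meanOsc, integral_prod_swap f]
  exact integral_prod_swap fun p => |f p - ∫ q, f q ∂μ.prod ν|

variable {μ : Measure α} {ν : Measure β} [IsProbabilityMeasure μ] [IsProbabilityMeasure ν]

theorem integral_abs_sub_integral_le {g h k : α → ℝ} (hg : Integrable g μ) (hh : Integrable h μ)
    (hk : Integrable k μ) :
    ∫ x, |g x - ∫ y, h y ∂μ| ∂μ ≤ ∫ x, |g x - ∫ y, k y ∂μ| ∂μ + ∫ x, |k x - h x| ∂μ := by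
  have hkh : |∫ y, k y ∂μ - ∫ y, h y ∂μ| ≤ ∫ x, |k x - h x| ∂μ := by
    rw [← integral_sub hk hh]
    exact abs_integral_le_integral_abs
  have hgk : Integrable (fun x => |g x - ∫ y, k y ∂μ|) μ := (hg.sub (integrable_const _)).abs
  calc ∫ x, |g x - ∫ y, h y ∂μ| ∂μ
      ≤ ∫ x, (|g x - ∫ y, k y ∂μ| + |∫ y, k y ∂μ - ∫ y, h y ∂μ|) ∂μ :=
        integral_mono (hg.sub (integrable_const _)).abs (hgk.add (integrable_const _))
          fun x => abs_sub_le _ _ _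
    _ = ∫ x, |g x - ∫ y, k y ∂μ| ∂μ + |∫ y, k y ∂μ - ∫ y, h y ∂μ| := by
        rw [integral_add hgk (integrable_const _), integral_const, probReal_univ, one_smul]
    _ ≤ _ := by gcongr

theorem meanOsc_le_two_mul {g : α → ℝ} (hg : Integrable g μ) (c : ℝ) :
    meanOsc μ g ≤ 2 * ∫ x, |g x - c| ∂μ := by
  have h := integral_abs_sub_integral_le hg hg (integrable_const c)
  simp only [integral_const, probReal_univ, one_smul, abs_sub_comm c] at h
  rw [meanOsc]
  linarith

theorem integral_meanOsc_slice_fst_le {f : α × β → ℝ} (hf : Integrable f (μ.prod ν)) :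
    ∫ y, meanOsc μ (fun x => f (x, y)) ∂ν ≤ 2 * meanOsc (μ.prod ν) f := by
  set M := ∫ q, f q ∂μ.prod ν
  have hfM : Integrable (fun p => |f p - M|) (μ.prod ν) := (hf.sub (integrable_const M)).abs
  rw [meanOsc, integral_prod_symm _ hfM, ← integral_const_mul]
  refine integral_mono_of_nonneg (.of_forall fun _ => meanOsc_nonneg _ _)
    (hfM.integral_prod_right.const_mul 2) ?_
  filter_upwards [hf.prod_left_ae] with y hy
  exact meanOsc_le_two_mul hy M

theorem integral_meanOsc_slice_snd_le {f : α × β → ℝ} (hf : Integrable f (μ.prod ν)) :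
    ∫ x, meanOsc ν (fun y => f (x, y)) ∂μ ≤ 2 * meanOsc (μ.prod ν) f := by
  rw [← meanOsc_prod_swap]
  exact integral_meanOsc_slice_fst_le hf.swap

theorem meanOsc_prod_le {f : α × β → ℝ} (hf : Integrable f (μ.prod ν)) :
    meanOsc (μ.prod ν) f ≤
      ∫ y, meanOsc μ (fun x => f (x, y)) ∂ν + ∫ x, meanOsc ν (fun y => f (x, y)) ∂μ := by
  set n : α → ℝ := fun x => ∫ y, f (x, y) ∂ν
  have hn : Integrable n μ := hf.integral_prod_left
  have hfn : Integrable (fun p => |f p - n p.1|) (μ.prod ν) := (hf.sub (hn.comp_fst ν)).abs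
  have hfm : Integrable (fun p => |f p - ∫ x, f (x, p.2) ∂μ|) (μ.prod ν) :=
    (hf.sub (hf.integral_prod_right.comp_snd μ)).abs
  have hm : Integrable (fun y => meanOsc μ (fun x => f (x, y))) ν := hfm.integral_prod_right
  have hv : Integrable (fun y => ∫ x, |f (x, y) - n x| ∂μ) ν := hfn.integral_prod_right
  have hslice : ∀ᵐ y ∂ν, ∫ x, |f (x, y) - ∫ x', n x' ∂μ| ∂μ ≤
      meanOsc μ (fun x => f (x, y)) + ∫ x, |f (x, y) - n x| ∂μ := by
    filter_upwards [hf.prod_left_ae] with y hy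
    exact integral_abs_sub_integral_le hy hn hy
  have hvertical : ∫ y, ∫ x, |f (x, y) - n x| ∂μ ∂ν = ∫ x, meanOsc ν (fun y => f (x, y)) ∂μ := by
    rw [← integral_prod_symm _ hfn, integral_prod _ hfn]
    rfl
  calc meanOsc (μ.prod ν) f = ∫ y, ∫ x, |f (x, y) - ∫ x', n x' ∂μ| ∂μ ∂ν := by
        rw [meanOsc, integral_prod f hf]
        exact integral_prod_symm _ (hf.sub (integrable_const (∫ x', n x' ∂μ))).abs
    _ ≤ ∫ y, (meanOsc μ (fun x => f (x, y)) + ∫ x, |f (x, y) - n x| ∂μ) ∂ν :=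
        integral_mono_of_nonneg (.of_forall fun _ => integral_nonneg fun _ => abs_nonneg _)
          (hm.add hv) hslice
    _ = _ := by rw [integral_add hm hv, hvertical]

end MeanOscillation

/-- there are absolute constants `0 < C₁ ≤ C₂` such that for all measurable
`A, B ⊆ ℝ` of positive finite measure and every measurable `f : ℝ² → ℝ` integrable on
`A × B`, the mean oscillation `O(f, A × B)` is comparable to
`(1/|B|)∫_B O(f(·,y), A) dy + (1/|A|)∫_A O(f(x,·), B) dx`. -/
theorem osc_product_slices :
    ∃ C₁ C₂ : ℝ, 0 < C₁ ∧ C₁ ≤ C₂ ∧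
      ∀ (A B : Set ℝ), MeasurableSet A → MeasurableSet B →
        0 < volume A → volume A ≠ ⊤ → 0 < volume B → volume B ≠ ⊤ →
      ∀ f : ℝ × ℝ → ℝ, Measurable f → IntegrableOn f (A ×ˢ B) volume →
        C₁ * ((⨍ y in B, osc1 (fun t => f (t, y)) A) +
              (⨍ x in A, osc1 (fun t => f (x, t)) B)) ≤ osc2 f (A ×ˢ B) ∧
        osc2 f (A ×ˢ B) ≤
          C₂ * ((⨍ y in B, osc1 (fun t => f (t, y)) A) +
                (⨍ x in A, osc1 (fun t => f (x, t)) B)) := by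
  refine ⟨1 / 4, 1, by norm_num, by norm_num, ?_⟩
  intro A B _ _ hA0 hAt hB0 hBt f _ hf
  have : IsProbabilityMeasure volume[|A] := cond_isProbabilityMeasure_of_finite hA0.ne' hAt
  have : IsProbabilityMeasure volume[|B] := cond_isProbabilityMeasure_of_finite hB0.ne' hBt
  have hprod : (volume : Measure (ℝ × ℝ))[|A ×ˢ B] = volume[|A].prod volume[|B] := by
    rw [Measure.volume_eq_prod, cond_prod hAt hBt]
  have hf' : Integrable f (volume[|A].prod volume[|B]) := by
    rw [← hprod]
    refine hf.smul_measure (ENNReal.inv_ne_top.2 ?_)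
    rw [Measure.volume_eq_prod, Measure.prod_prod]
    exact mul_ne_zero hA0.ne' hB0.ne'
  simp only [osc1_eq_meanOsc, osc2_eq_meanOsc, setAverage_eq_integral_cond, hprod]
  exact ⟨by linarith [integral_meanOsc_slice_fst_le hf', integral_meanOsc_slice_snd_le hf'],
    by linarith [meanOsc_prod_le hf']⟩
end
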